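/- arXiv:2505.15562 — 9 statements merged into one kernel-verified Lean document; each statement's English description precedes it below -/
import Mathlib

section
/- Let f, w₁,…,w_k, v₁, v₂ be smooth vector fields on an open subset U of ℝⁿ. Define pointwise D₀(p) = span{w₁(p),…,w_k(p)}, D₁(p) = D₀(p) + span{v₁(p), v₂(p)}, D₂(p) = D₁(p) + span{[f,w_i](p), [f,v₁](p), [f,v₂](p)}. Assume: dim D₀ = k, dim D₁ = k+2 and dim D₂ = k+4 at every point; D₁ is involutive (the Lie bracket of any two of its listed generators lies pointwise in D₁); [f, w_i] ∈ D₁ pointwise for all i; and D₁ is not contained in the Cauchy characteristic distribution of D₂ (i.e., some generator of D₁ has a bracket with a generator of D₂ that leaves D₂ at some point). Suppose there exist smooth functions α¹, α², not both vanishing, and a smooth vector field v_c with v_c − (α¹v₁ + α²v₂) ∈ D₀ pointwise and v_c ∉ D₀, such that, with H₁ = D₀ + span{v_c} and H₂ = D₁ + span{[f, v_c]}, one has H₁ ⊂ C(H₂), i.e., the bracket of each generator of H₁ with each generator of H₂ lies pointwise in H₂. Then (α¹)²[v₁,[v₁,f]] + 2α¹α²[v₁,[v₂,f]] + (α²)²[v₂,[v₂,f]]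 lies pointwise in D₂. -/
/-- The Lie bracket `[v,w](p) = Dw(p)·v(p) − Dv(p)·w(p)` of two vector fields. -/
noncomputable def lieB {E : Type*} [NormedAddCommGroup E] [NormedSpace ℝ E]
    (v w : E → E) : E → E :=
  fun p => fderiv ℝ w p (v p) - fderiv ℝ v p (w p)

/-- Pointwise span of `D₀ = span{w₁,…,w_k}`. -/
def D0span (n k : ℕ) (w : Fin k → (Fin n → ℝ) → Fin n → ℝ)
    (p : Fin n → ℝ) : Submodule ℝ (Fin n → ℝ) :=
  Submodule.span ℝ (Set.range fun i => w i p)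

/-- Pointwise span of `D₁ = D₀ + span{v₁, v₂}`. -/
def D1span (n k : ℕ) (w : Fin k → (Fin n → ℝ) → Fin n → ℝ)
    (v1 v2 : (Fin n → ℝ) → Fin n → ℝ) (p : Fin n → ℝ) : Submodule ℝ (Fin n → ℝ) :=
  Submodule.span ℝ (insert (v1 p) (insert (v2 p) (Set.range fun i => w i p)))

/-- Pointwise span of `D₂ = D₁ + span{[f,w_i], [f,v₁], [f,v₂]}`. -/
def D2span (n k : ℕ) (f : (Fin n → ℝ) → Fin n → ℝ)
    (w : Fin k → (Fin n → ℝ) → Fin n → ℝ)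
    (v1 v2 : (Fin n → ℝ) → Fin n → ℝ) (p : Fin n → ℝ) : Submodule ℝ (Fin n → ℝ) :=
  Submodule.span ℝ
    (insert (lieB f v1 p) (insert (lieB f v2 p) (insert (v1 p) (insert (v2 p)
      ((Set.range fun i => w i p) ∪ (Set.range fun i => lieB f (w i) p))))))

/-- Pointwise span of `H₂ = D₁ + span{[f,v_c]}`. -/
def H2span (n k : ℕ) (f : (Fin n → ℝ) → Fin n → ℝ)
    (w : Fin k → (Fin n → ℝ) → Fin n → ℝ)
    (v1 v2 vc : (Fin n → ℝ) → Fin n → ℝ) (p : Fin n → ℝ) : Submodule ℝ (Fin n → ℝ) :=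
  Submodule.span ℝ
    (insert (lieB f vc p) (insert (v1 p) (insert (v2 p) (Set.range fun i => w i p))))

/-! ### Auxiliary lemmas -/

open Filter Topology

section Aux

variable {n : ℕ}

lemma diffAt_of_contDiffOn {F : Type*} [NormedAddCommGroup F] [NormedSpace ℝ F]
    {U : Set (Fin n → ℝ)} (hU : IsOpen U)
    {X : (Fin n → ℝ) → F} (hX : ContDiffOn ℝ (⊤ : ℕ∞) X U)
    {p : Fin n → ℝ} (hp : p ∈ U) : DifferentiableAt ℝ X p :=
  (hX.contDiffAt (hU.mem_nhds hp)).differentiableAt (by simp)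

lemma contDiffOn_fderiv {U : Set (Fin n → ℝ)} (hU : IsOpen U)
    {X : (Fin n → ℝ) → Fin n → ℝ} (hX : ContDiffOn ℝ (⊤ : ℕ∞) X U) :
    ContDiffOn ℝ (⊤ : ℕ∞) (fderiv ℝ X) U :=
  hX.fderiv_of_isOpen hU (by exact_mod_cast le_top)

lemma contDiffOn_lieB {U : Set (Fin n → ℝ)} (hU : IsOpen U)
    {X Y : (Fin n → ℝ) → Fin n → ℝ}
    (hX : ContDiffOn ℝ (⊤ : ℕ∞) X U) (hY : ContDiffOn ℝ (⊤ : ℕ∞) Y U) :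
    ContDiffOn ℝ (⊤ : ℕ∞) (lieB X Y) U :=
  ((contDiffOn_fderiv hU hY).clm_apply hX).sub ((contDiffOn_fderiv hU hX).clm_apply hY)

lemma lieB_swap (X Y : (Fin n → ℝ) → Fin n → ℝ) (p : Fin n → ℝ) :
    lieB X Y p = - lieB Y X p := by
  simp [lieB]

lemma lieB_neg_right (A Y : (Fin n → ℝ) → Fin n → ℝ) (p : Fin n → ℝ) :
    lieB A (fun q => -(Y q)) p = - lieB A Y p := by
  unfold lieB
  rw [fderiv_fun_neg]
  simp only [ContinuousLinearMap.neg_apply, map_neg]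
  abel

lemma lieB_inner_swap (A B C : (Fin n → ℝ) → Fin n → ℝ) (p : Fin n → ℝ) :
    lieB A (lieB B C) p = - lieB A (lieB C B) p := by
  have h : lieB B C = fun q => -(lieB C B q) := funext fun q => by simp [lieB]
  rw [h, lieB_neg_right]

/-- Smooth local selection of coefficients. -/
lemma smooth_selection {ι : Type*} [Fintype ι] [DecidableEq ι]
    {U : Set (Fin n → ℝ)} (hU : IsOpen U)
    (g : ι → (Fin n → ℝ) → Fin n → ℝ) (u : (Fin n → ℝ) → Fin n → ℝ)
    (hg : ∀ i, ContDiffOn ℝ (⊤ : ℕ∞) (g i) U) (hu : ContDiffOn ℝ (⊤ : ℕ∞) u U)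
    (hind : ∀ p ∈ U, LinearIndependent ℝ (fun i => g i p))
    (hmem : ∀ p ∈ U, u p ∈ Submodule.span ℝ (Set.range fun i => g i p))
    {p₀ : Fin n → ℝ} (hp₀ : p₀ ∈ U) :
    ∃ V : Set (Fin n → ℝ), IsOpen V ∧ p₀ ∈ V ∧ V ⊆ U ∧ ∃ c : ι → (Fin n → ℝ) → ℝ,
      (∀ i, ContDiffOn ℝ (⊤ : ℕ∞) (c i) V) ∧
      ∀ p ∈ V, u p = ∑ i, c i p • g i p := by
  classical
  set G : (Fin n → ℝ) → ((ι → ℝ) →L[ℝ] (Fin n → ℝ)) :=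
    fun p => ∑ i, (ContinuousLinearMap.proj i).smulRight (g i p) with hG
  have hGapp : ∀ p (b : ι → ℝ), G p b = ∑ i, b i • g i p := by
    intro p b
    simp [hG, ContinuousLinearMap.sum_apply]
  have hker : LinearMap.ker (G p₀).toLinearMap = ⊥ := by
    rw [LinearMap.ker_eq_bot']
    intro b hb
    have hb' : ∑ i, b i • g i p₀ = 0 := by
      rw [← hGapp]; exact hb
    exact funext fun i => (Fintype.linearIndependent_iff.1 (hind p₀ hp₀)) b hb' i
  obtain ⟨L, hL⟩ := LinearMap.exists_leftInverse_of_injective (G p₀).toLinearMap hker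
  set Lc : (Fin n → ℝ) →L[ℝ] (ι → ℝ) := L.toContinuousLinearMap with hLc
  set T : (Fin n → ℝ) → ((ι → ℝ) →L[ℝ] (ι → ℝ)) := fun p => Lc.comp (G p) with hT
  have hTapp : ∀ p b, T p b = Lc (G p b) := fun p b => rfl
  have hT0 : T p₀ = 1 := by
    ext b i
    have : L (G p₀ b) = b := by
      have := LinearMap.congr_fun hL b
      simpa using this
    simpa [hT, hLc] using congrFun this i
  have hTsm : ContDiffOn ℝ (⊤ : ℕ∞) T U := by
    have : T = fun p => ∑ i,
        (ContinuousLinearMap.smulRightL ℝ (ι → ℝ) (ι → ℝ) (ContinuousLinearMap.proj i))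
          (Lc (g i p)) := by
      funext p
      ext b j
      simp [hT, hG, ContinuousLinearMap.sum_apply, map_sum,
        ContinuousLinearMap.smulRightL, mul_comm]
    rw [this]
    exact ContDiffOn.sum fun i _ =>
      ((ContinuousLinearMap.smulRightL ℝ (ι → ℝ) (ι → ℝ)
        (ContinuousLinearMap.proj i)).contDiff.comp_contDiffOn
        (Lc.contDiff.comp_contDiffOn (hg i)))
  set V : Set (Fin n → ℝ) := U ∩ (T ⁻¹' {S | IsUnit S}) with hV
  have hVopen : IsOpen V := (hTsm.continuousOn).isOpen_inter_preimage hU Units.isOpen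
  have hp₀V : p₀ ∈ V := ⟨hp₀, by simp [hT0]⟩
  refine ⟨V, hVopen, hp₀V, Set.inter_subset_left, ?_⟩
  set c : ι → (Fin n → ℝ) → ℝ := fun i p => Ring.inverse (T p) (Lc (u p)) i with hc
  have key : ∀ p ∈ V, u p = ∑ i, c i p • g i p := by
    rintro p ⟨hpU, hpUnit⟩
    obtain ⟨b, hb⟩ := Submodule.mem_span_range_iff_exists_fun ℝ |>.1 (hmem p hpU)
    have hub : u p = G p b := by rw [hGapp]; exact hb.symm
    obtain ⟨S, hS⟩ := hpUnit
    have hcb : (fun i => c i p) = b := by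
      funext i
      have : Ring.inverse (T p) (Lc (u p)) = b := by
        rw [hub, ← hTapp, ← hS, Ring.inverse_unit]
        have : (↑S⁻¹ * ↑S : (ι → ℝ) →L[ℝ] (ι → ℝ)) b = b := by
          rw [S.inv_mul]; rfl
        simpa [ContinuousLinearMap.mul_apply, hS] using this
      exact congrFun this i
    calc u p = G p b := hub
    _ = ∑ i, b i • g i p := hGapp p b
    _ = ∑ i, c i p • g i p := by rw [← hcb]
  refine ⟨c, ?_, key⟩
  intro i
  have hinv : ContDiffOn ℝ (⊤ : ℕ∞) (fun p => Ring.inverse (T p)) V := by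
    intro p hp
    have hTat : ContDiffAt ℝ (⊤ : ℕ∞) T p :=
      (hTsm.contDiffAt (hU.mem_nhds hp.1))
    obtain ⟨S, hS⟩ := hp.2
    have : ContDiffAt ℝ (⊤ : ℕ∞) (fun q => Ring.inverse (T q)) p := by
      have h1 : ContDiffAt ℝ (⊤ : ℕ∞) Ring.inverse (T p) := by
        rw [← hS]; exact contDiffAt_ringInverse ℝ S
      exact h1.comp p hTat
    exact this.contDiffWithinAt
  have hup : ContDiffOn ℝ (⊤ : ℕ∞) (fun p => Lc (u p)) V :=
    Lc.contDiff.comp_contDiffOn (hu.mono Set.inter_subset_left)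
  have := (hinv.clm_apply hup)
  exact (ContinuousLinearMap.proj i).contDiff.comp_contDiffOn this

/-- Expansion of `lieB X Y` at `p` when `Y` agrees near `p` with `∑ cᵢ • gᵢ`. -/
lemma lieB_right_expand {ι : Type*} [Fintype ι]
    {X Y : (Fin n → ℝ) → Fin n → ℝ} {g : ι → (Fin n → ℝ) → Fin n → ℝ}
    {c : ι → (Fin n → ℝ) → ℝ} {p : Fin n → ℝ}
    (hY : Y =ᶠ[𝓝 p] fun q => ∑ i, c i q • g i q)
    (hc : ∀ i, DifferentiableAt ℝ (c i) p) (hg : ∀ i, DifferentiableAt ℝ (g i) p) :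
    lieB X Y p = ∑ i, (c i p • lieB X (g i) p + (fderiv ℝ (c i) p (X p)) • g i p) := by
  have hYp : Y p = ∑ i, c i p • g i p := hY.self_of_nhds
  have hfd : fderiv ℝ Y p = ∑ i, (c i p • fderiv ℝ (g i) p
      + (fderiv ℝ (c i) p).smulRight (g i p)) := by
    rw [hY.fderiv_eq, show (fun q => ∑ i, c i q • g i q) = fun q => ∑ i, (c i • g i) q from rfl,
      fderiv_fun_sum fun i _ => ((hc i).smul (hg i))]
    exact Finset.sum_congr rfl fun i _ => fderiv_fun_smul (hc i) (hg i)
  simp only [lieB, hYp, hfd, ContinuousLinearMap.sum_apply, map_sum, map_smul,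
    ContinuousLinearMap.add_apply, ContinuousLinearMap.smul_apply,
    ContinuousLinearMap.smulRight_apply, ← Finset.sum_sub_distrib]
  refine Finset.sum_congr rfl fun i _ => ?_
  rw [smul_sub]
  abel

lemma lieB_left_expand {ι : Type*} [Fintype ι]
    {X Y : (Fin n → ℝ) → Fin n → ℝ} {g : ι → (Fin n → ℝ) → Fin n → ℝ}
    {c : ι → (Fin n → ℝ) → ℝ} {p : Fin n → ℝ}
    (hY : Y =ᶠ[𝓝 p] fun q => ∑ i, c i q • g i q)
    (hc : ∀ i, DifferentiableAt ℝ (c i) p) (hg : ∀ i, DifferentiableAt ℝ (g i) p) :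
    lieB Y X p = ∑ i, (c i p • lieB (g i) X p - (fderiv ℝ (c i) p (X p)) • g i p) := by
  have h := lieB_right_expand (X := X) hY hc hg
  rw [lieB_swap Y X, h, ← Finset.sum_neg_distrib]
  refine Finset.sum_congr rfl fun i _ => ?_
  rw [lieB_swap (g i) X]
  module

lemma fderiv_lieB_apply {U : Set (Fin n → ℝ)} (hU : IsOpen U)
    {A B : (Fin n → ℝ) → Fin n → ℝ}
    (hA : ContDiffOn ℝ (⊤ : ℕ∞) A U) (hB : ContDiffOn ℝ (⊤ : ℕ∞) B U)
    {p : Fin n → ℝ} (hp : p ∈ U) (x : Fin n → ℝ) :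
    fderiv ℝ (lieB A B) p x =
      fderiv ℝ B p (fderiv ℝ A p x) + fderiv ℝ (fderiv ℝ B) p x (A p)
      - fderiv ℝ A p (fderiv ℝ B p x) - fderiv ℝ (fderiv ℝ A) p x (B p) := by
  have dA := diffAt_of_contDiffOn hU hA hp
  have dB := diffAt_of_contDiffOn hU hB hp
  have dA' : DifferentiableAt ℝ (fderiv ℝ A) p :=
    diffAt_of_contDiffOn hU (contDiffOn_fderiv hU hA) hp
  have dB' : DifferentiableAt ℝ (fderiv ℝ B) p :=
    diffAt_of_contDiffOn hU (contDiffOn_fderiv hU hB) hp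
  have h1 : DifferentiableAt ℝ (fun q => fderiv ℝ B q (A q)) p := dB'.clm_apply dA
  have h2 : DifferentiableAt ℝ (fun q => fderiv ℝ A q (B q)) p := dA'.clm_apply dB
  have e : fderiv ℝ (lieB A B) p
      = fderiv ℝ (fun q => fderiv ℝ B q (A q)) p - fderiv ℝ (fun q => fderiv ℝ A q (B q)) p := by
    rw [← fderiv_sub h1 h2]; rfl
  rw [e, fderiv_clm_apply dB' dA, fderiv_clm_apply dA' dB]
  simp only [ContinuousLinearMap.sub_apply, ContinuousLinearMap.add_apply,
    ContinuousLinearMap.comp_apply, ContinuousLinearMap.flip_apply]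
  abel

lemma lieB_jacobi {U : Set (Fin n → ℝ)} (hU : IsOpen U)
    {X Y Z : (Fin n → ℝ) → Fin n → ℝ}
    (hX : ContDiffOn ℝ (⊤ : ℕ∞) X U) (hY : ContDiffOn ℝ (⊤ : ℕ∞) Y U)
    (hZ : ContDiffOn ℝ (⊤ : ℕ∞) Z U) {p : Fin n → ℝ} (hp : p ∈ U) :
    lieB X (lieB Y Z) p + lieB Y (lieB Z X) p + lieB Z (lieB X Y) p = 0 := by
  have hsX : ∀ v w, fderiv ℝ (fderiv ℝ X) p v w = fderiv ℝ (fderiv ℝ X) p w v :=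
    (hX.contDiffAt (hU.mem_nhds hp)).isSymmSndFDerivAt (by simp only [minSmoothness_of_isRCLikeNormedField]; exact WithTop.coe_le_coe.2 le_top)
  have hsY : ∀ v w, fderiv ℝ (fderiv ℝ Y) p v w = fderiv ℝ (fderiv ℝ Y) p w v :=
    (hY.contDiffAt (hU.mem_nhds hp)).isSymmSndFDerivAt (by simp only [minSmoothness_of_isRCLikeNormedField]; exact WithTop.coe_le_coe.2 le_top)
  have hsZ : ∀ v w, fderiv ℝ (fderiv ℝ Z) p v w = fderiv ℝ (fderiv ℝ Z) p w v :=
    (hZ.contDiffAt (hU.mem_nhds hp)).isSymmSndFDerivAt (by simp only [minSmoothness_of_isRCLikeNormedField]; exact WithTop.coe_le_coe.2 le_top)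
  have k1 := fderiv_lieB_apply hU hY hZ hp (X p)
  have k2 := fderiv_lieB_apply hU hZ hX hp (Y p)
  have k3 := fderiv_lieB_apply hU hX hY hp (Z p)
  show (fderiv ℝ (lieB Y Z) p (X p) - fderiv ℝ X p (fderiv ℝ Z p (Y p) - fderiv ℝ Y p (Z p)))
     + (fderiv ℝ (lieB Z X) p (Y p) - fderiv ℝ Y p (fderiv ℝ X p (Z p) - fderiv ℝ Z p (X p)))
     + (fderiv ℝ (lieB X Y) p (Z p) - fderiv ℝ Z p (fderiv ℝ Y p (X p) - fderiv ℝ X p (Y p))) = 0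
  rw [k1, k2, k3, map_sub, map_sub, map_sub,
    hsZ (X p) (Y p), hsX (Y p) (Z p), hsY (Z p) (X p)]
  abel

end Aux

set_option maxHeartbeats 1000000 in
/-- **Lemma 1.**
Under the stated assumptions on `D₀ ⊂ D₁ ⊂ D₂` and the vector field `f`, if a vector
field `v_c = α¹v₁ + α²v₂ mod D₀` (with `α¹, α²` not both vanishing, `v_c ∉ D₀`) is such
that `H₁ = D₀ + span{v_c}` lies in the Cauchy characteristic distribution of
`H₂ = D₁ + span{[f,v_c]}`, then
`(α¹)²[v₁,[v₁,f]] + 2α¹α²[v₁,[v₂,f]] + (α²)²[v₂,[v₂,f]] ∈ D₂` pointwise. -/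
theorem quadratic_necessary_condition
    (n k : ℕ) (U : Set (Fin n → ℝ)) (hU : IsOpen U)
    (f v1 v2 vc : (Fin n → ℝ) → Fin n → ℝ)
    (w : Fin k → (Fin n → ℝ) → Fin n → ℝ)
    (α1 α2 : (Fin n → ℝ) → ℝ)
    (hf : ContDiffOn ℝ (⊤ : ℕ∞) f U)
    (hv1 : ContDiffOn ℝ (⊤ : ℕ∞) v1 U) (hv2 : ContDiffOn ℝ (⊤ : ℕ∞) v2 U)
    (hw : ∀ i, ContDiffOn ℝ (⊤ : ℕ∞) (w i) U)
    (hvc : ContDiffOn ℝ (⊤ : ℕ∞) vc U)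
    (hα1 : ContDiffOn ℝ (⊤ : ℕ∞) α1 U) (hα2 : ContDiffOn ℝ (⊤ : ℕ∞) α2 U)
    -- constant pointwise dimensions `k`, `k+2`, `k+4`:
    (hdim0 : ∀ p ∈ U, Module.finrank ℝ (D0span n k w p) = k)
    (hdim1 : ∀ p ∈ U, Module.finrank ℝ (D1span n k w v1 v2 p) = k + 2)
    (hdim2 : ∀ p ∈ U, Module.finrank ℝ (D2span n k f w v1 v2 p) = k + 4)
    -- `D₁` is involutive:
    (hinv1 : ∀ p ∈ U, ∀ i j : Fin k ⊕ Fin 2,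
        lieB (Sum.elim w ![v1, v2] i) (Sum.elim w ![v1, v2] j) p ∈ D1span n k w v1 v2 p)
    -- `[f, D₀] ⊂ D₁`:
    (hfD0 : ∀ p ∈ U, ∀ i, lieB f (w i) p ∈ D1span n k w v1 v2 p)
    -- `D₁ ⊄ C(D₂)`:
    (hnotCauchy : ∃ p ∈ U, ∃ (i : Fin k ⊕ Fin 2) (j : (Fin k ⊕ Fin 2) ⊕ (Fin k ⊕ Fin 2)),
        lieB (Sum.elim w ![v1, v2] i)
          (Sum.elim (Sum.elim w ![v1, v2])
            (fun m => lieB f (Sum.elim w ![v1, v2] m)) j) p ∉ D2span n k f w v1 v2 p)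
    -- `α¹, α²` not both vanishing:
    (hαne : ∀ p ∈ U, ¬(α1 p = 0 ∧ α2 p = 0))
    -- `v_c − (α¹v₁ + α²v₂) ∈ D₀` pointwise:
    (hcomb : ∀ p ∈ U, vc p - (α1 p • v1 p + α2 p • v2 p) ∈ D0span n k w p)
    -- `v_c ∉ D₀`:
    (hvcD0 : ∀ p ∈ U, vc p ∉ D0span n k w p)
    -- `H₁ ⊂ C(H₂)`:
    (hH1CH2 : ∀ p ∈ U, ∀ (i : Fin k ⊕ Fin 1) (j : (Fin k ⊕ Fin 2) ⊕ Fin 1),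
        lieB (Sum.elim w ![vc] i)
          (Sum.elim (Sum.elim w ![v1, v2]) ![lieB f vc] j) p
          ∈ H2span n k f w v1 v2 vc p) :
    ∀ p ∈ U,
      (α1 p) ^ 2 • lieB v1 (lieB v1 f) p +
        (2 * α1 p * α2 p) • lieB v1 (lieB v2 f) p +
        (α2 p) ^ 2 • lieB v2 (lieB v2 f) p ∈ D2span n k f w v1 v2 p := by
  classical
  intro p hp
  set G1 : Fin k ⊕ Fin 2 → (Fin n → ℝ) → Fin n → ℝ := Sum.elim w ![v1, v2] with hG1def
  -- smoothness of the `D₁` generators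
  have hG1sm : ∀ j, ContDiffOn ℝ (⊤ : ℕ∞) (G1 j) U := by
    rintro (i | b)
    · exact hw i
    · fin_cases b
      · exact hv1
      · exact hv2
  have hG1diff : ∀ q ∈ U, ∀ j, DifferentiableAt ℝ (G1 j) q :=
    fun q hq j => diffAt_of_contDiffOn hU (hG1sm j) hq
  -- span identification for `D₁`
  have hset1 : ∀ q, Submodule.span ℝ (Set.range fun j => G1 j q) = D1span n k w v1 v2 q := by
    intro q
    unfold D1span
    congr 1
    ext x
    simp only [Set.mem_range, Set.mem_insert_iff]
    constructor
    · rintro ⟨(i | b), rfl⟩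
      · exact Or.inr (Or.inr ⟨i, rfl⟩)
      · fin_cases b
        · exact Or.inl rfl
        · exact Or.inr (Or.inl rfl)
    · rintro (rfl | rfl | ⟨i, rfl⟩)
      exacts [⟨Sum.inr 0, rfl⟩, ⟨Sum.inr 1, rfl⟩, ⟨Sum.inl i, rfl⟩]
  -- linear independence from the dimension hypotheses
  have hindw : ∀ q ∈ U, LinearIndependent ℝ fun i => w i q := by
    intro q hq
    rw [linearIndependent_iff_card_eq_finrank_span]
    have h0 := hdim0 q hq
    unfold D0span at h0
    simpa [Set.finrank] using h0.symm
  have hindG1 : ∀ q ∈ U, LinearIndependent ℝ fun j => G1 j q := by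
    intro q hq
    rw [linearIndependent_iff_card_eq_finrank_span]
    have h1 := hdim1 q hq
    rw [← hset1 q] at h1
    simpa [Set.finrank] using h1.symm
  -- membership facts
  have hG1memD1 : ∀ j q, G1 j q ∈ D1span n k w v1 v2 q := by
    rintro (i | b) q
    · exact Submodule.subset_span (Or.inr (Or.inr ⟨i, rfl⟩))
    · fin_cases b
      · exact Submodule.subset_span (Or.inl rfl)
      · exact Submodule.subset_span (Or.inr (Or.inl rfl))
  have hD1le : ∀ q, D1span n k w v1 v2 q ≤ D2span n k f w v1 v2 q := by
    intro q
    unfold D1span D2span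
    apply Submodule.span_le.2
    intro x hx
    apply Submodule.subset_span
    simp only [Set.mem_insert_iff, Set.mem_union, Set.mem_range] at hx ⊢
    rcases hx with rfl | rfl | ⟨i, rfl⟩
    · exact Or.inr (Or.inr (Or.inl rfl))
    · exact Or.inr (Or.inr (Or.inr (Or.inl rfl)))
    · exact Or.inr (Or.inr (Or.inr (Or.inr (Or.inl ⟨i, rfl⟩))))
  have hG1memD2 : ∀ j q, G1 j q ∈ D2span n k f w v1 v2 q :=
    fun j q => hD1le q (hG1memD1 j q)
  have hlfv1mem : ∀ q, lieB f v1 q ∈ D2span n k f w v1 v2 q :=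
    fun q => Submodule.subset_span (Or.inl rfl)
  have hlfv2mem : ∀ q, lieB f v2 q ∈ D2span n k f w v1 v2 q :=
    fun q => Submodule.subset_span (Or.inr (Or.inl rfl))
  have hlfG1memD2 : ∀ j q, lieB f (G1 j) q ∈ D2span n k f w v1 v2 q := by
    rintro (i | b) q
    · exact Submodule.subset_span (Or.inr (Or.inr (Or.inr (Or.inr (Or.inr ⟨i, rfl⟩)))))
    · fin_cases b
      · exact hlfv1mem q
      · exact hlfv2mem q
  -- Step 1: smooth selection for `vc − (α¹v₁ + α²v₂) ∈ D₀`
  obtain ⟨V₁, hV₁o, hpV₁, hV₁U, c, hcsm, hceq⟩ :=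
    smooth_selection hU w (fun q => vc q - (α1 q • v1 q + α2 q • v2 q)) hw
      (hvc.sub ((hα1.smul hv1).add (hα2.smul hv2))) hindw (fun q hq => hcomb q hq) hp
  set a : (Fin k ⊕ Fin 2) → (Fin n → ℝ) → ℝ := Sum.elim c ![α1, α2] with hadef
  have hvc_eq : ∀ q ∈ V₁, vc q = ∑ j, a j q • G1 j q := by
    intro q hq
    have h0 := hceq q hq
    rw [Fintype.sum_sum_type]
    simp only [hadef, hG1def, Sum.elim_inl, Sum.elim_inr, Fin.sum_univ_two,
      Matrix.cons_val_zero, Matrix.cons_val_one, Matrix.head_cons]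
    rw [← h0]
    abel
  have hvcF : ∀ q ∈ V₁, vc =ᶠ[𝓝 q] fun r => ∑ j, a j r • G1 j r :=
    fun q hq => eventuallyEq_of_mem (hV₁o.mem_nhds hq) (fun r hr => hvc_eq r hr)
  have hadiff : ∀ q ∈ V₁, ∀ j, DifferentiableAt ℝ (a j) q := by
    intro q hq j
    rcases j with i | b
    · exact diffAt_of_contDiffOn hV₁o (hcsm i) hq
    · fin_cases b
      · exact diffAt_of_contDiffOn hU hα1 (hV₁U hq)
      · exact diffAt_of_contDiffOn hU hα2 (hV₁U hq)
  -- Step 2: `z = [f,vc] − α¹[f,v₁] − α²[f,v₂]` lies in `D₁` near `p`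
  set z : (Fin n → ℝ) → Fin n → ℝ :=
    fun q => lieB f vc q - (α1 q • lieB f v1 q + α2 q • lieB f v2 q) with hzdef
  have hzsm : ContDiffOn ℝ (⊤ : ℕ∞) z V₁ :=
    ((contDiffOn_lieB hU hf hvc).sub
      ((hα1.smul (contDiffOn_lieB hU hf hv1)).add
        (hα2.smul (contDiffOn_lieB hU hf hv2)))).mono hV₁U
  have hzmem : ∀ q ∈ V₁, z q ∈ Submodule.span ℝ (Set.range fun j => G1 j q) := by
    intro q hq
    rw [hset1 q]
    have hexp := lieB_right_expand (X := f) (hvcF q hq) (hadiff q hq)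
      (fun j => hG1diff q (hV₁U hq) j)
    have hzq : z q = (∑ i : Fin k, (c i q • lieB f (w i) q + fderiv ℝ (c i) q (f q) • w i q))
        + (fderiv ℝ α1 q (f q) • v1 q + fderiv ℝ α2 q (f q) • v2 q) := by
      simp only [hzdef]
      rw [hexp, Fintype.sum_sum_type]
      simp only [hadef, hG1def, Sum.elim_inl, Sum.elim_inr, Fin.sum_univ_two,
        Matrix.cons_val_zero, Matrix.cons_val_one, Matrix.head_cons]
      abel
    rw [hzq]
    refine add_mem (Submodule.sum_mem _ fun i _ => add_mem ?_ ?_) (add_mem ?_ ?_)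
    · exact Submodule.smul_mem _ _ (hfD0 q (hV₁U hq) i)
    · exact Submodule.smul_mem _ _ (hG1memD1 (Sum.inl i) q)
    · exact Submodule.smul_mem _ _ (hG1memD1 (Sum.inr 0) q)
    · exact Submodule.smul_mem _ _ (hG1memD1 (Sum.inr 1) q)
  -- Step 3: smooth selection for `z ∈ D₁` on `V₁`
  obtain ⟨V₂, hV₂o, hpV₂, hV₂V₁, e, hesm, heeq⟩ :=
    smooth_selection hV₁o G1 z (fun j => (hG1sm j).mono hV₁U) hzsm
      (fun q hq => hindG1 q (hV₁U hq)) hzmem hpV₁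
  set b : ((Fin k ⊕ Fin 2) ⊕ Fin 2) → (Fin n → ℝ) → ℝ := Sum.elim e ![α1, α2] with hbdef
  set G2 : ((Fin k ⊕ Fin 2) ⊕ Fin 2) → (Fin n → ℝ) → Fin n → ℝ :=
    Sum.elim G1 ![lieB f v1, lieB f v2] with hG2def
  have hYeq : ∀ q ∈ V₂, lieB f vc q = ∑ j, b j q • G2 j q := by
    intro q hq
    have h0 := heeq q hq
    simp only [hzdef] at h0
    rw [Fintype.sum_sum_type]
    simp only [hbdef, hG2def, Sum.elim_inl, Sum.elim_inr, Fin.sum_univ_two,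
      Matrix.cons_val_zero, Matrix.cons_val_one, Matrix.head_cons]
    rw [← h0]
    abel
  have hYF2p : lieB f vc =ᶠ[𝓝 p] fun q => ∑ j, b j q • G2 j q :=
    eventuallyEq_of_mem (hV₂o.mem_nhds hpV₂) (fun q hq => hYeq q hq)
  have hbdiff : ∀ j, DifferentiableAt ℝ (b j) p := by
    rintro (j | bb)
    · exact diffAt_of_contDiffOn hV₂o (hesm j) hpV₂
    · fin_cases bb
      · exact diffAt_of_contDiffOn hU hα1 hp
      · exact diffAt_of_contDiffOn hU hα2 hp
  have hG2diff : ∀ j, DifferentiableAt ℝ (G2 j) p := by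
    rintro (j | bb)
    · exact hG1diff p hp j
    · fin_cases bb
      · exact diffAt_of_contDiffOn hU (contDiffOn_lieB hU hf hv1) hp
      · exact diffAt_of_contDiffOn hU (contDiffOn_lieB hU hf hv2) hp
  -- Step 4: expansion of `[vᵢ, [f,vc]]` modulo `D₂`
  have step4 : ∀ X : (Fin n → ℝ) → Fin n → ℝ,
      (∀ j, lieB X (G1 j) p ∈ D1span n k w v1 v2 p) →
      lieB X (lieB f vc) p - (α1 p • lieB X (lieB f v1) p + α2 p • lieB X (lieB f v2) p)
        ∈ D2span n k f w v1 v2 p := by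
    intro X hXbr
    have hexp := lieB_right_expand (X := X) hYF2p hbdiff hG2diff
    have heq2 : lieB X (lieB f vc) p
        - (α1 p • lieB X (lieB f v1) p + α2 p • lieB X (lieB f v2) p)
        = (∑ j, (e j p • lieB X (G1 j) p + fderiv ℝ (e j) p (X p) • G1 j p))
          + (fderiv ℝ α1 p (X p) • lieB f v1 p + fderiv ℝ α2 p (X p) • lieB f v2 p) := by
      rw [hexp, Fintype.sum_sum_type]
      simp only [hbdef, hG2def, Sum.elim_inl, Sum.elim_inr, Fin.sum_univ_two,
        Matrix.cons_val_zero, Matrix.cons_val_one, Matrix.head_cons]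
      abel
    rw [heq2]
    refine add_mem (Submodule.sum_mem _ fun j _ => add_mem ?_ ?_) (add_mem ?_ ?_)
    · exact Submodule.smul_mem _ _ (hD1le p (hXbr j))
    · exact Submodule.smul_mem _ _ (hG1memD2 j p)
    · exact Submodule.smul_mem _ _ (hlfv1mem p)
    · exact Submodule.smul_mem _ _ (hlfv2mem p)
  have h1 := step4 v1 (fun j => hinv1 p hp (Sum.inr 0) j)
  have h2 := step4 v2 (fun j => hinv1 p hp (Sum.inr 1) j)
  -- `H₂(p) ⊆ D₂(p)`
  have hzmemD1 : z p ∈ D1span n k w v1 v2 p := by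
    rw [← hset1 p]; exact hzmem p hpV₁
  have hlfvcmem : lieB f vc p ∈ D2span n k f w v1 v2 p := by
    have hsplit : lieB f vc p = z p + (α1 p • lieB f v1 p + α2 p • lieB f v2 p) := by
      simp only [hzdef]; abel
    rw [hsplit]
    exact add_mem (hD1le p hzmemD1)
      (add_mem (Submodule.smul_mem _ _ (hlfv1mem p)) (Submodule.smul_mem _ _ (hlfv2mem p)))
  have hH2le : H2span n k f w v1 v2 vc p ≤ D2span n k f w v1 v2 p := by
    unfold H2span
    apply Submodule.span_le.2
    intro x hx
    simp only [Set.mem_insert_iff, Set.mem_range] at hx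
    rcases hx with rfl | rfl | rfl | ⟨i, rfl⟩
    · exact hlfvcmem
    · exact hG1memD2 (Sum.inr 0) p
    · exact hG1memD2 (Sum.inr 1) p
    · exact hG1memD2 (Sum.inl i) p
  -- brackets with `H₁` generators
  have hwY : ∀ i : Fin k, lieB (w i) (lieB f vc) p ∈ D2span n k f w v1 v2 p :=
    fun i => hH2le (hH1CH2 p hp (Sum.inl i) (Sum.inr 0))
  have hvcY : lieB vc (lieB f vc) p ∈ D2span n k f w v1 v2 p :=
    hH2le (hH1CH2 p hp (Sum.inr 0) (Sum.inr 0))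
  -- Step 5: expansion of `[vc, [f,vc]]`
  have hexp5 := lieB_left_expand (X := lieB f vc) (hvcF p hpV₁) (hadiff p hpV₁)
    (fun j => hG1diff p hp j)
  have h3 : lieB vc (lieB f vc) p
      - (α1 p • lieB v1 (lieB f vc) p + α2 p • lieB v2 (lieB f vc) p)
      ∈ D2span n k f w v1 v2 p := by
    have heq3 : lieB vc (lieB f vc) p
        - (α1 p • lieB v1 (lieB f vc) p + α2 p • lieB v2 (lieB f vc) p)
        = (∑ i : Fin k, c i p • lieB (w i) (lieB f vc) p)
          - (∑ j, fderiv ℝ (a j) p (lieB f vc p) • G1 j p) := by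
      rw [hexp5, Finset.sum_sub_distrib, Fintype.sum_sum_type
        (f := fun j => a j p • lieB (G1 j) (lieB f vc) p)]
      simp only [hadef, hG1def, Sum.elim_inl, Sum.elim_inr, Fin.sum_univ_two,
        Matrix.cons_val_zero, Matrix.cons_val_one, Matrix.head_cons]
      abel
    rw [heq3]
    exact sub_mem (Submodule.sum_mem _ fun i _ => Submodule.smul_mem _ _ (hwY i))
      (Submodule.sum_mem _ fun j _ => Submodule.smul_mem _ _ (hG1memD2 j p))
  -- the quadratic combination lies in `D₂`
  have hT : (α1 p * α1 p) • lieB v1 (lieB f v1) p + (α1 p * α2 p) • lieB v1 (lieB f v2) p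
      + (α1 p * α2 p) • lieB v2 (lieB f v1) p + (α2 p * α2 p) • lieB v2 (lieB f v2) p
      ∈ D2span n k f w v1 v2 p := by
    have hcomb2 := sub_mem (sub_mem (sub_mem hvcY h3)
      (Submodule.smul_mem _ (α1 p) h1)) (Submodule.smul_mem _ (α2 p) h2)
    convert hcomb2 using 1
    module
  -- Jacobi identity step
  have hB21 : lieB v2 (lieB f v1) p
      = lieB v1 (lieB f v2) p - lieB f (lieB v1 v2) p := by
    have hj := lieB_jacobi hU hv2 hf hv1 hp
    rw [lieB_inner_swap v1 v2 f p] at hj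
    calc lieB v2 (lieB f v1) p
        = (lieB v2 (lieB f v1) p + lieB f (lieB v1 v2) p + -lieB v1 (lieB f v2) p)
          + (lieB v1 (lieB f v2) p - lieB f (lieB v1 v2) p) := by abel
      _ = 0 + (lieB v1 (lieB f v2) p - lieB f (lieB v1 v2) p) := by rw [hj]
      _ = lieB v1 (lieB f v2) p - lieB f (lieB v1 v2) p := by rw [zero_add]
  -- `[f,[v₁,v₂]] ∈ D₂`
  have hbr12mem : ∀ q ∈ U, lieB v1 v2 q ∈ Submodule.span ℝ (Set.range fun j => G1 j q) := by
    intro q hq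
    rw [hset1 q]
    exact hinv1 q hq (Sum.inr 0) (Sum.inr 1)
  obtain ⟨V₃, hV₃o, hpV₃, hV₃U, m, hmsm, hmeq⟩ :=
    smooth_selection hU G1 (lieB v1 v2) hG1sm (contDiffOn_lieB hU hv1 hv2) hindG1 hbr12mem hp
  have hWmem : lieB f (lieB v1 v2) p ∈ D2span n k f w v1 v2 p := by
    have hexpW := lieB_right_expand (X := f)
      (eventuallyEq_of_mem (hV₃o.mem_nhds hpV₃) (fun q hq => hmeq q hq))
      (fun j => diffAt_of_contDiffOn hV₃o (hmsm j) hpV₃) (fun j => hG1diff p hp j)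
    rw [hexpW]
    exact Submodule.sum_mem _ fun j _ => add_mem
      (Submodule.smul_mem _ _ (hlfG1memD2 j p)) (Submodule.smul_mem _ _ (hG1memD2 j p))
  -- final assembly
  have hfinal : (α1 p) ^ 2 • lieB v1 (lieB v1 f) p
      + (2 * α1 p * α2 p) • lieB v1 (lieB v2 f) p
      + (α2 p) ^ 2 • lieB v2 (lieB v2 f) p
      = -((α1 p * α1 p) • lieB v1 (lieB f v1) p + (α1 p * α2 p) • lieB v1 (lieB f v2) p
        + (α1 p * α2 p) • lieB v2 (lieB f v1) p + (α2 p * α2 p) • lieB v2 (lieB f v2) p)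
        - (α1 p * α2 p) • lieB f (lieB v1 v2) p := by
    rw [lieB_inner_swap v1 v1 f p, lieB_inner_swap v1 v2 f p, lieB_inner_swap v2 v2 f p, hB21]
    module
  rw [hfinal]
  exact sub_mem (neg_mem hT) (Submodule.smul_mem _ _ hWmem)
end

section
/- Let a be a smooth vector field on ℝⁿ whose j-th component a^j depends only on the coordinates z¹,…,z^{min(j+1,n)} (triangular structure). Then for every m with 2 ≤ m ≤ n, the iterated Lie bracket [∂_{z^m}, [∂_{z^m}, a]] takes, at every point, values in span{e_{m−1}, e_m, …, e_n}, where e_j denotes the j-th standard basis vector of ℝⁿ. Consequently, for the drift vector field a of a system in general triangular form and m = n−(p−1), the double bracket [∂_{z^m},[∂_{z^m},a]] lies in any distribution containing span{∂_{z^{n−p}},…,∂_{z^n}}, so the coordinate vector field v_c = ∂_{z^{n−(p−1)}} satisfies the quadratic necessary condition (with α¹ = 0, α² = 1). -/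
/-- Let `a` be a smooth vector field on `ℝⁿ` whose `j`-th component (one-based) depends only
on the coordinates `z¹,…,z^{min(j+1,n)}` (triangular structure).  Then for every `m`
with `2 ≤ m ≤ n`, the iterated Lie bracket `[∂_{z^m}, [∂_{z^m}, a]]` takes, at every
point, values in `span{e_{m−1}, …, e_n}`; consequently it lies in any submodule
containing these basis vectors.  (Coordinates are zero-based in the formalization:
the paper's `z^j`, `e_j` are `z ⟨j-1⟩`, `Pi.single ⟨j-1⟩ 1`.) -/
theorem triangular_drift_double_bracket
    (n : ℕ) (a : (Fin n → ℝ) → Fin n → ℝ)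
    (ha : ContDiff ℝ (⊤ : ℕ∞) a)
    -- triangular structure: component `j` depends only on the coordinates `i ≤ j+1`:
    (htri : ∀ (j : Fin n) (z w : Fin n → ℝ),
        (∀ i : Fin n, (i : ℕ) ≤ (j : ℕ) + 1 → z i = w i) → a z j = a w j)
    (m : ℕ) (hm2 : 2 ≤ m) (hmn : m ≤ n) :
    ∀ p : Fin n → ℝ,
      (lieB (fun _ => Pi.single (⟨m - 1, by omega⟩ : Fin n) (1 : ℝ))
          (lieB (fun _ => Pi.single (⟨m - 1, by omega⟩ : Fin n) (1 : ℝ)) a) p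
        ∈ Submodule.span ℝ
            {e : Fin n → ℝ | ∃ j : Fin n, m ≤ (j : ℕ) + 2 ∧ e = Pi.single j 1}) ∧
      ∀ M : Submodule ℝ (Fin n → ℝ),
        (∀ j : Fin n, m ≤ (j : ℕ) + 2 → Pi.single j (1 : ℝ) ∈ M) →
        lieB (fun _ => Pi.single (⟨m - 1, by omega⟩ : Fin n) (1 : ℝ))
          (lieB (fun _ => Pi.single (⟨m - 1, by omega⟩ : Fin n) (1 : ℝ)) a) p ∈ M := by
  intro p
  set idx : Fin n := ⟨m - 1, by omega⟩ with hidx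
  set c : Fin n → ℝ := Pi.single idx 1 with hc
  have hd : Differentiable ℝ a := ha.differentiable (by norm_num)
  -- First directional derivative components vanish for low indices
  have key1 : ∀ (q : Fin n → ℝ) (j : Fin n), (j : ℕ) + 2 < m →
      fderiv ℝ a q c j = 0 := by
    intro q j hj
    have hA : HasFDerivAt a (fderiv ℝ a q) q := (hd q).hasFDerivAt
    have hproj : HasFDerivAt (fun z => a z j)
        ((ContinuousLinearMap.proj j).comp (fderiv ℝ a q)) q :=
      (ContinuousLinearMap.proj (R := ℝ) (φ := fun _ : Fin n => ℝ) j).hasFDerivAt.comp q hA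
    have hline : HasDerivAt (fun t : ℝ => q + t • c) ((1:ℝ) • c) 0 :=
      ((hasDerivAt_id (0:ℝ)).smul_const c).const_add q
    have hproj2 : HasFDerivAt (fun z => a z j)
        ((ContinuousLinearMap.proj j).comp (fderiv ℝ a q)) (q + (0:ℝ) • c) := by
      simpa using hproj
    have hcomp := hproj2.comp_hasDerivAt 0 hline
    have heq : (fun t : ℝ => a (q + t • c) j) = fun _ : ℝ => a q j := by
      funext t
      apply htri
      intro i hi
      have hne : i ≠ idx := by
        intro h
        have : (i : ℕ) = m - 1 := by rw [h]
        omega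
      simp [hc, Pi.single_eq_of_ne hne]
    have hcomp' : HasDerivAt (fun _ : ℝ => a q j)
        (((ContinuousLinearMap.proj j).comp (fderiv ℝ a q)) ((1:ℝ) • c)) 0 := by
      rw [← heq]; exact hcomp
    have h0 := hcomp'.unique (hasDerivAt_const 0 (a q j))
    simpa using h0
  set b : (Fin n → ℝ) → Fin n → ℝ := fun q => fderiv ℝ a q c with hb
  have hb_smooth : ContDiff ℝ (⊤ : ℕ∞) b := by
    have h1 : ContDiff ℝ (⊤ : ℕ∞) (fderiv ℝ a) := ha.fderiv_right (by norm_num)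
    exact h1.clm_apply contDiff_const
  have hbd : Differentiable ℝ b := hb_smooth.differentiable (by norm_num)
  have key2 : ∀ j : Fin n, (j : ℕ) + 2 < m → fderiv ℝ b p c j = 0 := by
    intro j hj
    have hB : HasFDerivAt b (fderiv ℝ b p) p := (hbd p).hasFDerivAt
    have hproj : HasFDerivAt (fun z => b z j)
        ((ContinuousLinearMap.proj j).comp (fderiv ℝ b p)) p :=
      (ContinuousLinearMap.proj (R := ℝ) (φ := fun _ : Fin n => ℝ) j).hasFDerivAt.comp p hB
    have heq : (fun z => b z j) = fun _ : Fin n → ℝ => (0:ℝ) := by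
      funext z; exact key1 z j hj
    have hproj' : HasFDerivAt (fun _ : Fin n → ℝ => (0:ℝ))
        ((ContinuousLinearMap.proj j).comp (fderiv ℝ b p)) p := by
      rw [← heq]; exact hproj
    have h0 := hproj'.unique (hasFDerivAt_const 0 p)
    have := congrArg (fun L => L c) h0
    simpa using this
  have hb_eq : lieB (fun _ => c) a = b := by
    funext q
    simp [lieB, hb]
  have hval : lieB (fun _ => c) (lieB (fun _ => c) a) p = fderiv ℝ b p c := by
    rw [hb_eq]
    simp [lieB]
  have hsum : fderiv ℝ b p c = ∑ j : Fin n, (fderiv ℝ b p c j) • (Pi.single j (1:ℝ) : Fin n → ℝ) := by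
    funext i
    simp [Pi.single_apply, Finset.sum_ite_eq']
  have main : ∀ M : Submodule ℝ (Fin n → ℝ),
      (∀ j : Fin n, m ≤ (j : ℕ) + 2 → Pi.single j (1 : ℝ) ∈ M) →
      lieB (fun _ => c) (lieB (fun _ => c) a) p ∈ M := by
    intro M hM
    rw [hval, hsum]
    refine Submodule.sum_mem M fun j _ => ?_
    by_cases hjm : m ≤ (j : ℕ) + 2
    · exact M.smul_mem _ (hM j hjm)
    · rw [key2 j (by omega), zero_smul]
      exact M.zero_mem
  constructor
  · exact main _ fun j hj => Submodule.subset_span ⟨j, hj, rfl⟩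
  · exact main
end

section
/- Let n ≥ k1 + k2 + 1 with k1, k2 ≥ 1, and on ℝⁿ consider the vector fields a = Σ_{j=1}^{k1−1} z^{j+1}∂_{z^j} + Σ_{j=k1+1}^{k1+k2−1} z^{j+1}∂_{z^j} + Σ_{l=k1+k2}^{n−1} a^l(z)∂_{z^l} and b₁ = ∂_{z^{k1}} + Σ_{l=k1+k2}^{n−1} b^l(z)∂_{z^l}, where each a^l and b^l is smooth and depends only on (z¹,…,z^{l+1}). Then for every i with 0 ≤ i ≤ min(k1,k2)−1, the iterated adjoint ad_a^i b₁ (where ad_a b = [a,b]) equals (−1)^i ∂_{z^{k1−i}} + (−1)^i b^{k1+k2}(z) ∂_{z^{k1+k2−i}} + R_i(z), where the remainder vector field R_i takes, at every point, values in span{e_j : k1+k2−i+1 ≤ j ≤ n−1}. -/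
lemma fderiv_comp_proj {n : ℕ} (f : (Fin n → ℝ) → (Fin n → ℝ)) (p u : Fin n → ℝ)
    (hf : DifferentiableAt ℝ f p) (j : Fin n) :
    fderiv ℝ f p u j = fderiv ℝ (fun z => f z j) p u := by
  have h : (fun z => f z j) = (ContinuousLinearMap.proj j (R := ℝ) (φ := fun _ : Fin n => ℝ)) ∘ f := rfl
  rw [h, fderiv_comp _ (ContinuousLinearMap.differentiableAt _) hf]
  simp

lemma fderiv_apply_const {n : ℕ} (f : (Fin n → ℝ) → (Fin n → ℝ)) (p u : Fin n → ℝ)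
    (hf : DifferentiableAt ℝ f p) (j : Fin n) (c : ℝ) (hc : ∀ z, f z j = c) :
    fderiv ℝ f p u j = 0 := by
  rw [fderiv_comp_proj f p u hf j]
  rw [show (fun z => f z j) = fun _ => c from funext hc, fderiv_fun_const]
  simp

lemma fderiv_apply_coord {n : ℕ} (f : (Fin n → ℝ) → (Fin n → ℝ)) (p u : Fin n → ℝ)
    (hf : DifferentiableAt ℝ f p) (j m : Fin n) (hc : ∀ z, f z j = z m) :
    fderiv ℝ f p u j = u m := by
  rw [fderiv_comp_proj f p u hf j]
  rw [show (fun z => f z j) = ⇑(ContinuousLinearMap.proj m (R := ℝ) (φ := fun _ : Fin n => ℝ)) from funext hc,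
    ContinuousLinearMap.fderiv]
  simp

lemma mem_span_single {n : ℕ} (v : Fin n → ℝ) (P Q : Fin n → Prop)
    (h : ∀ j, v j ≠ 0 → P j ∧ Q j) :
    v ∈ Submodule.span ℝ {e : Fin n → ℝ | ∃ j, P j ∧ Q j ∧ e = Pi.single j 1} := by
  have hv : v = ∑ j : Fin n, v j • (Pi.single j 1 : Fin n → ℝ) := by
    funext m
    simp [Finset.sum_apply, Pi.single_apply]
  rw [hv]
  refine Submodule.sum_mem _ fun j _ => ?_
  by_cases hj : v j = 0
  · simp [hj]
  · exact Submodule.smul_mem _ _ (Submodule.subset_span ⟨j, (h j hj).1, (h j hj).2, rfl⟩)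



/-- For the drift `a` and first input vector field `b₁` of a system in general triangular
form (with `k1, k2 ≥ 1` and `n ≥ k1 + k2 + 1`), the iterated adjoint `ad_a^i b₁`
(where `ad_a b = [a, b]`) equals
`(−1)^i ∂_{z^{k1−i}} + (−1)^i b^{k1+k2}(z) ∂_{z^{k1+k2−i}} + R_i(z)` for all
`0 ≤ i ≤ min(k1,k2) − 1`, where `R_i` takes values in
`span{e_j : k1+k2−i+1 ≤ j ≤ n−1}` (one-based indices; the formalization is
zero-based: the paper's `z^j`, `e_j` are `z ⟨j-1⟩`, `Pi.single ⟨j-1⟩ 1`). -/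
theorem gtf_adjoint_iterates
    (n k1 k2 : ℕ) (hk1 : 1 ≤ k1) (hk2 : 1 ≤ k2) (hn : k1 + k2 + 1 ≤ n)
    (a b1 : (Fin n → ℝ) → Fin n → ℝ)
    (A B : ℕ → (Fin n → ℝ) → ℝ)
    (hA : ∀ l, k1 + k2 ≤ l → l + 1 ≤ n →
        ContDiff ℝ (⊤ : ℕ∞) (A l) ∧ ContDiff ℝ (⊤ : ℕ∞) (B l))
    -- `a^l` and `b^l` depend only on the coordinates `z¹,…,z^{l+1}`:
    (hdep : ∀ l, k1 + k2 ≤ l → l + 1 ≤ n → ∀ z w : Fin n → ℝ,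
        (∀ i : Fin n, (i : ℕ) ≤ l → z i = w i) → A l z = A l w ∧ B l z = B l w)
    -- structure of the drift vector field `a`:
    (ha1 : ∀ (z : Fin n → ℝ) (j : ℕ) (h : j + 1 < k1),
        a z ⟨j, by omega⟩ = z ⟨j + 1, by omega⟩)
    (ha2 : ∀ z : Fin n → ℝ, a z ⟨k1 - 1, by omega⟩ = 0)
    (ha3 : ∀ (z : Fin n → ℝ) (j : ℕ) (h1 : k1 ≤ j) (h2 : j + 1 < k1 + k2),
        a z ⟨j, by omega⟩ = z ⟨j + 1, by omega⟩)
    (ha4 : ∀ (z : Fin n → ℝ) (j : ℕ) (h1 : k1 + k2 ≤ j + 1) (h2 : j + 2 ≤ n),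
        a z ⟨j, by omega⟩ = A (j + 1) z)
    (ha5 : ∀ z : Fin n → ℝ, a z ⟨n - 1, by omega⟩ = 0)
    -- structure of the input vector field `b₁`:
    (hb1 : ∀ z : Fin n → ℝ, b1 z ⟨k1 - 1, by omega⟩ = 1)
    (hb2 : ∀ (z : Fin n → ℝ) (j : ℕ) (h1 : k1 + k2 ≤ j + 1) (h2 : j + 2 ≤ n),
        b1 z ⟨j, by omega⟩ = B (j + 1) z)
    (hb3 : ∀ (z : Fin n → ℝ) (j : ℕ) (hj : j < n),
        j + 1 ≠ k1 → ¬(k1 + k2 ≤ j + 1 ∧ j + 2 ≤ n) → b1 z ⟨j, hj⟩ = 0) :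
    ∀ (i : ℕ) (hi : i + 1 ≤ min k1 k2) (p : Fin n → ℝ),
      (lieB a)^[i] b1 p
          - ((-1 : ℝ) ^ i) •
              (Pi.single (⟨k1 - i - 1, by omega⟩ : Fin n) (1 : ℝ) : Fin n → ℝ)
          - ((-1 : ℝ) ^ i * B (k1 + k2) p) •
              (Pi.single (⟨k1 + k2 - i - 1, by omega⟩ : Fin n) (1 : ℝ) : Fin n → ℝ)
        ∈ Submodule.span ℝ
            {e : Fin n → ℝ | ∃ j : Fin n,
              k1 + k2 - i + 1 ≤ (j : ℕ) + 1 ∧ (j : ℕ) + 1 ≤ n - 1 ∧ e = Pi.single j 1} := by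
  suffices H : ∀ i : ℕ, i + 1 ≤ min k1 k2 →
      ContDiff ℝ (⊤ : ℕ∞) ((lieB a)^[i] b1) ∧
      (∀ z : Fin n → ℝ, (lieB a)^[i] b1 z ⟨k1 - 1 - i, by omega⟩ = (-1:ℝ)^i) ∧
      (∀ z : Fin n → ℝ,
        (lieB a)^[i] b1 z ⟨k1 + k2 - 1 - i, by omega⟩ = (-1:ℝ)^i * B (k1+k2) z) ∧
      (∀ (z : Fin n → ℝ) (j : ℕ) (hj : j < n), j ≠ k1 - 1 - i →
        (j + 1 < k1 + k2 - i ∨ j = n - 1) → (lieB a)^[i] b1 z ⟨j, hj⟩ = 0) by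
    intro i hi p
    obtain ⟨-, h2, h3, h4⟩ := H i hi
    have hik1 : i + 1 ≤ k1 := le_trans hi (min_le_left _ _)
    have hik2 : i + 1 ≤ k2 := le_trans hi (min_le_right _ _)
    refine mem_span_single _ _ _ (fun j hj => ?_)
    by_contra hc
    apply hj
    rw [not_and_or] at hc
    obtain ⟨jv, hjv⟩ := j
    simp only [Pi.sub_apply, Pi.smul_apply, smul_eq_mul, Pi.single_apply, Fin.mk.injEq]
    simp only [Fin.val_mk] at hc
    by_cases e1 : jv = k1 - i - 1
    · rw [if_pos e1, if_neg (by omega)]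
      have hv := h2 p
      have hfe : (⟨k1 - 1 - i, by omega⟩ : Fin n) = ⟨jv, hjv⟩ := Fin.mk_eq_mk.mpr (by omega)
      rw [hfe] at hv
      rw [hv]; ring
    · by_cases e2 : jv = k1 + k2 - i - 1
      · rw [if_neg e1, if_pos e2]
        have hv := h3 p
        have hfe : (⟨k1 + k2 - 1 - i, by omega⟩ : Fin n) = ⟨jv, hjv⟩ := Fin.mk_eq_mk.mpr (by omega)
        rw [hfe] at hv
        rw [hv]; ring
      · rw [if_neg e1, if_neg e2]
        have hv : (lieB a)^[i] b1 p ⟨jv, hjv⟩ = 0 := by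
          refine h4 p jv hjv (by omega) ?_
          rcases hc with hc | hc
          · exact Or.inl (by omega)
          · exact Or.inr (by omega)
        rw [hv]; ring
  -- smoothness of the coordinate projections
  have hproj : ∀ m : Fin n, ContDiff ℝ (⊤:ℕ∞) (fun z : Fin n → ℝ => z m) :=
    fun m => (ContinuousLinearMap.proj m (R := ℝ) (φ := fun _ : Fin n => ℝ)).contDiff
  -- smoothness of a
  have haC : ContDiff ℝ (⊤:ℕ∞) a := by
    rw [contDiff_pi]
    rintro ⟨jv, hjv⟩
    by_cases c1 : jv + 1 < k1
    · rw [show (fun x => a x ⟨jv, hjv⟩) = fun x => x ⟨jv + 1, by omega⟩ from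
        funext fun z => ha1 z jv c1]
      exact hproj _
    · by_cases c2 : jv = k1 - 1
      · subst c2
        rw [show (fun x => a x ⟨k1 - 1, hjv⟩) = fun _ => (0:ℝ) from funext fun z => ha2 z]
        exact contDiff_const
      · by_cases c3 : jv + 1 < k1 + k2
        · rw [show (fun x => a x ⟨jv, hjv⟩) = fun x => x ⟨jv + 1, by omega⟩ from
            funext fun z => ha3 z jv (by omega) c3]
          exact hproj _
        · by_cases c4 : jv + 2 ≤ n
          · rw [show (fun x => a x ⟨jv, hjv⟩) = A (jv + 1) from
              funext fun z => ha4 z jv (by omega) c4]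
            exact (hA (jv + 1) (by omega) (by omega)).1
          · have : jv = n - 1 := by omega
            subst this
            rw [show (fun x => a x ⟨n - 1, hjv⟩) = fun _ => (0:ℝ) from funext fun z => ha5 z]
            exact contDiff_const
  intro i
  induction i with
  | zero =>
    intro _
    refine ⟨?_, ?_, ?_, ?_⟩
    · -- smoothness of b1
      simp only [Function.iterate_zero, id_eq]
      rw [contDiff_pi]
      rintro ⟨jv, hjv⟩
      by_cases c2 : jv = k1 - 1
      · subst c2
        rw [show (fun x => b1 x ⟨k1 - 1, hjv⟩) = fun _ => (1:ℝ) from funext fun z => hb1 z]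
        exact contDiff_const
      · by_cases c3 : k1 + k2 ≤ jv + 1 ∧ jv + 2 ≤ n
        · rw [show (fun x => b1 x ⟨jv, hjv⟩) = B (jv + 1) from
            funext fun z => hb2 z jv c3.1 c3.2]
          exact (hA (jv + 1) (by omega) (by omega)).2
        · rw [show (fun x => b1 x ⟨jv, hjv⟩) = fun _ => (0:ℝ) from
            funext fun z => hb3 z jv hjv (by omega) c3]
          exact contDiff_const
    · intro z
      simp only [Function.iterate_zero, id_eq, pow_zero, Nat.sub_zero]
      exact hb1 z
    · intro z
      simp only [Function.iterate_zero, id_eq, pow_zero, Nat.sub_zero, one_mul]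
      have := hb2 z (k1 + k2 - 1) (by omega) (by omega)
      rw [show k1 + k2 - 1 + 1 = k1 + k2 from by omega] at this
      exact this
    · intro z j hj hne hcase
      simp only [Function.iterate_zero, id_eq, Nat.sub_zero] at *
      exact hb3 z j hj (by omega) (by rcases hcase with h | h <;> omega)
  | succ i IH =>
    intro hi
    have hik1 : i + 2 ≤ k1 := le_trans hi (min_le_left _ _)
    have hik2 : i + 2 ≤ k2 := le_trans hi (min_le_right _ _)
    obtain ⟨hVC, h2, h3, h4⟩ := IH (by omega)
    set V := (lieB a)^[i] b1 with hVdef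
    have hit : (lieB a)^[i+1] b1 = lieB a V := Function.iterate_succ_apply' (lieB a) i b1
    have hVd : Differentiable ℝ V := hVC.differentiable (by simp)
    have had : Differentiable ℝ a := haC.differentiable (by simp)
    have fin_congr : ∀ (x y : ℕ) (hx : x < n) (hy : y < n), x = y →
        ∀ w : Fin n → ℝ, w ⟨x, hx⟩ = w ⟨y, hy⟩ := by
      rintro x y hx hy rfl w; rfl
    have comp : ∀ (z : Fin n → ℝ) (j : Fin n),
        lieB a V z j = fderiv ℝ V z (a z) j - fderiv ℝ a z (V z) j := fun _ _ => rfl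
    refine ⟨?_, ?_, ?_, ?_⟩
    · -- smoothness
      rw [hit]
      show ContDiff ℝ (⊤:ℕ∞) (fun p => fderiv ℝ V p (a p) - fderiv ℝ a p (V p))
      exact ((hVC.fderiv_right le_rfl).clm_apply haC).sub
        ((haC.fderiv_right le_rfl).clm_apply hVC)
    · -- the (-1)^(i+1) component at k1 - 1 - (i+1)
      intro z
      rw [hit, comp]
      have e1 : fderiv ℝ V z (a z) ⟨k1 - 1 - (i+1), by omega⟩ = 0 :=
        fderiv_apply_const V z (a z) (hVd z) _ 0
          (fun w => h4 w (k1 - 1 - (i+1)) (by omega) (by omega) (Or.inl (by omega)))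
      have e2 : fderiv ℝ a z (V z) ⟨k1 - 1 - (i+1), by omega⟩ = V z ⟨k1 - 1 - i, by omega⟩ :=
        fderiv_apply_coord a z (V z) (had z) _ ⟨k1 - 1 - i, by omega⟩
          (fun w => (ha1 w (k1 - 1 - (i+1)) (by omega)).trans
            (fin_congr _ _ (by omega) (by omega) (by omega) w))
      rw [e1, e2, h2 z]
      ring
    · -- the (-1)^(i+1) * B component at k1 + k2 - 1 - (i+1)
      intro z
      rw [hit, comp]
      have e1 : fderiv ℝ V z (a z) ⟨k1 + k2 - 1 - (i+1), by omega⟩ = 0 :=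
        fderiv_apply_const V z (a z) (hVd z) _ 0
          (fun w => h4 w (k1 + k2 - 1 - (i+1)) (by omega) (by omega) (Or.inl (by omega)))
      have e2 : fderiv ℝ a z (V z) ⟨k1 + k2 - 1 - (i+1), by omega⟩
          = V z ⟨k1 + k2 - 1 - i, by omega⟩ :=
        fderiv_apply_coord a z (V z) (had z) _ ⟨k1 + k2 - 1 - i, by omega⟩
          (fun w => (ha3 w (k1 + k2 - 1 - (i+1)) (by omega) (by omega)).trans
            (fin_congr _ _ (by omega) (by omega) (by omega) w))
      rw [e1, e2, h3 z]
      ring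
    · -- vanishing components
      intro z j hj hne hcase
      rw [hit, comp]
      have e1 : fderiv ℝ V z (a z) ⟨j, hj⟩ = 0 := by
        by_cases jc : j = k1 - 1 - i
        · subst jc
          exact fderiv_apply_const V z (a z) (hVd z) _ ((-1:ℝ)^i) (fun w => h2 w)
        · refine fderiv_apply_const V z (a z) (hVd z) _ 0 (fun w => h4 w j hj jc ?_)
          rcases hcase with h | h
          · exact Or.inl (by omega)
          · exact Or.inr h
      rw [e1]
      rcases hcase with hcase | hcase
      · -- j + 1 < k1 + k2 - (i+1)
        have e2 : fderiv ℝ a z (V z) ⟨j, hj⟩ = 0 := by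
          by_cases c1 : j + 1 < k1
          · rw [fderiv_apply_coord a z (V z) (had z) _ ⟨j + 1, by omega⟩
              (fun w => ha1 w j c1)]
            exact h4 z (j + 1) (by omega) (by omega) (Or.inl (by omega))
          · by_cases c2 : j = k1 - 1
            · subst c2
              exact fderiv_apply_const a z (V z) (had z) _ 0 (fun w => ha2 w)
            · rw [fderiv_apply_coord a z (V z) (had z) _ ⟨j + 1, by omega⟩
                (fun w => ha3 w j (by omega) (by omega))]
              exact h4 z (j + 1) (by omega) (by omega) (Or.inl (by omega))
        rw [e2]; ring
      · -- j = n - 1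
        subst hcase
        have e2 : fderiv ℝ a z (V z) ⟨n - 1, hj⟩ = 0 :=
          fderiv_apply_const a z (V z) (had z) _ 0 (fun w => ha5 w)
        rw [e2]; ring
end

section
/- For the drift and input vector fields f, g₁, g₂ of the planar VTOL aircraft model on ℝ⁶, the following Lie bracket identities hold at every point: [g₁, g₂] = 0 (so span{g₁,g₂} is involutive), [g₁, [g₁, f]] = 0, and [g₂, [g₂, f]] = −2ε·g₁. -/
/-- Drift vector field of the planar VTOL aircraft:
`f = vx∂x + vz∂z + ω∂θ − ∂vz`, with state `(x, z, θ, vx, vz, ω)`. -/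
noncomputable def vtolF (p : Fin 6 → ℝ) : Fin 6 → ℝ :=
  ![p 3, p 4, p 5, 0, -1, 0]

/-- First input vector field of the planar VTOL aircraft:
`g₁ = −sinθ ∂vx + cosθ ∂vz`. -/
noncomputable def vtolG1 (p : Fin 6 → ℝ) : Fin 6 → ℝ :=
  ![0, 0, 0, -Real.sin (p 2), Real.cos (p 2), 0]

/-- Second input vector field of the planar VTOL aircraft:
`g₂ = ε cosθ ∂vx + ε sinθ ∂vz + ∂ω`. -/
noncomputable def vtolG2 (ε : ℝ) (p : Fin 6 → ℝ) : Fin 6 → ℝ :=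
  ![0, 0, 0, ε * Real.cos (p 2), ε * Real.sin (p 2), 1]

lemma cons_val_2' {α : Type*} (a b c d e f : α) : ![a,b,c,d,e,f] 2 = c := rfl
lemma cons_val_3' {α : Type*} (a b c d e f : α) : ![a,b,c,d,e,f] 3 = d := rfl
lemma cons_val_4' {α : Type*} (a b c d e f : α) : ![a,b,c,d,e,f] 4 = e := rfl
lemma cons_val_5' {α : Type*} (a b c d e f : α) : ![a,b,c,d,e,f] 5 = f := rfl

noncomputable abbrev pr6 (i : Fin 6) : (Fin 6 → ℝ) →L[ℝ] ℝ := ContinuousLinearMap.proj i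

lemma hasF_apply (i : Fin 6) (p : Fin 6 → ℝ) :
    HasFDerivAt (fun q : Fin 6 → ℝ => q i) (pr6 i) p :=
  (pr6 i).hasFDerivAt

lemma hasF_sin (p : Fin 6 → ℝ) :
    HasFDerivAt (fun q : Fin 6 → ℝ => Real.sin (q 2)) (Real.cos (p 2) • pr6 2) p :=
  by have := (Real.hasDerivAt_sin (p 2)).comp_hasFDerivAt p (hasF_apply 2 p); exact this

lemma hasF_cos (p : Fin 6 → ℝ) :
    HasFDerivAt (fun q : Fin 6 → ℝ => Real.cos (q 2)) ((-Real.sin (p 2)) • pr6 2) p :=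
  by have := (Real.hasDerivAt_cos (p 2)).comp_hasFDerivAt p (hasF_apply 2 p); exact this

lemma hasG1 (p : Fin 6 → ℝ) :
    HasFDerivAt vtolG1
      (ContinuousLinearMap.pi
        ![0, 0, 0, (-Real.cos (p 2)) • pr6 2, (-Real.sin (p 2)) • pr6 2, 0]) p := by
  refine hasFDerivAt_pi.2 ?_
  intro i
  fin_cases i
  · exact hasFDerivAt_const _ _
  · exact hasFDerivAt_const _ _
  · exact hasFDerivAt_const _ _
  · exact (neg_smul (Real.cos (p 2)) (pr6 2)) ▸ (hasF_sin p).neg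
  · exact hasF_cos p
  · exact hasFDerivAt_const _ _

lemma hasG2 (ε : ℝ) (p : Fin 6 → ℝ) :
    HasFDerivAt (vtolG2 ε)
      (ContinuousLinearMap.pi
        ![0, 0, 0, ε • ((-Real.sin (p 2)) • pr6 2), ε • (Real.cos (p 2) • pr6 2), 0]) p := by
  refine hasFDerivAt_pi.2 ?_
  intro i
  fin_cases i
  · exact hasFDerivAt_const _ _
  · exact hasFDerivAt_const _ _
  · exact hasFDerivAt_const _ _
  · exact (hasF_cos p).const_mul ε
  · exact (hasF_sin p).const_mul ε
  · exact hasFDerivAt_const _ _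

lemma hasFdrift (p : Fin 6 → ℝ) :
    HasFDerivAt vtolF
      (ContinuousLinearMap.pi ![pr6 3, pr6 4, pr6 5, 0, 0, 0]) p := by
  refine hasFDerivAt_pi.2 ?_
  intro i
  fin_cases i
  · exact hasF_apply 3 p
  · exact hasF_apply 4 p
  · exact hasF_apply 5 p
  · exact hasFDerivAt_const _ _
  · exact hasFDerivAt_const _ _
  · exact hasFDerivAt_const _ _

/-- Explicit formula for `[g₁, f]`. -/
lemma lieB_g1f : lieB vtolG1 vtolF = fun p =>
    ![-Real.sin (p 2), Real.cos (p 2), 0,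
      Real.cos (p 2) * p 5, Real.sin (p 2) * p 5, 0] := by
  funext p
  unfold lieB
  rw [(hasFdrift p).fderiv, (hasG1 p).fderiv]
  funext i
  fin_cases i <;>
    simp [vtolG1, vtolF, ContinuousLinearMap.pi_apply, cons_val_2', cons_val_3', cons_val_4', cons_val_5', mul_comm]

/-- Explicit formula for `[g₂, f]`. -/
lemma lieB_g2f (ε : ℝ) : lieB (vtolG2 ε) vtolF = fun p =>
    ![ε * Real.cos (p 2), ε * Real.sin (p 2), 1,
      ε * Real.sin (p 2) * p 5, -(ε * Real.cos (p 2)) * p 5, 0] := by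
  funext p
  unfold lieB
  rw [(hasFdrift p).fderiv, (hasG2 ε p).fderiv]
  funext i
  fin_cases i <;>
    simp [vtolG2, vtolF, ContinuousLinearMap.pi_apply, cons_val_2', cons_val_3', cons_val_4', cons_val_5'] <;> ring

lemma hasB1 (p : Fin 6 → ℝ) :
    HasFDerivAt (fun p : Fin 6 → ℝ =>
        (![-Real.sin (p 2), Real.cos (p 2), 0,
          Real.cos (p 2) * p 5, Real.sin (p 2) * p 5, 0] : Fin 6 → ℝ))
      (ContinuousLinearMap.pi
        ![(-Real.cos (p 2)) • pr6 2, (-Real.sin (p 2)) • pr6 2, 0,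
          Real.cos (p 2) • pr6 5 + p 5 • ((-Real.sin (p 2)) • pr6 2),
          Real.sin (p 2) • pr6 5 + p 5 • (Real.cos (p 2) • pr6 2), 0]) p := by
  refine hasFDerivAt_pi.2 ?_
  intro i
  fin_cases i
  · exact (neg_smul (Real.cos (p 2)) (pr6 2)) ▸ (hasF_sin p).neg
  · exact hasF_cos p
  · exact hasFDerivAt_const _ _
  · exact (hasF_cos p).mul (hasF_apply 5 p)
  · exact (hasF_sin p).mul (hasF_apply 5 p)
  · exact hasFDerivAt_const _ _

lemma hasB2 (ε : ℝ) (p : Fin 6 → ℝ) :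
    HasFDerivAt (fun p : Fin 6 → ℝ =>
        (![ε * Real.cos (p 2), ε * Real.sin (p 2), 1,
          ε * Real.sin (p 2) * p 5, -(ε * Real.cos (p 2)) * p 5, 0] : Fin 6 → ℝ))
      (ContinuousLinearMap.pi
        ![ε • ((-Real.sin (p 2)) • pr6 2), ε • (Real.cos (p 2) • pr6 2), 0,
          (ε * Real.sin (p 2)) • pr6 5 + p 5 • (ε • (Real.cos (p 2) • pr6 2)),
          (-(ε * Real.cos (p 2))) • pr6 5 +
            p 5 • (-(ε • ((-Real.sin (p 2)) • pr6 2))), 0]) p := by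
  refine hasFDerivAt_pi.2 ?_
  intro i
  fin_cases i
  · exact (hasF_cos p).const_mul ε
  · exact (hasF_sin p).const_mul ε
  · exact hasFDerivAt_const _ _
  · exact (((hasF_sin p).const_mul ε).mul (hasF_apply 5 p))
  · exact ((((hasF_cos p).const_mul ε).neg.mul (hasF_apply 5 p)))
  · exact hasFDerivAt_const _ _

/-- For the planar VTOL aircraft: `[g₁, g₂] = 0` (so `span{g₁,g₂}` is involutive),
`[g₁, [g₁, f]] = 0`, and `[g₂, [g₂, f]] = −2ε·g₁` at every point. -/
theorem vtol_bracket_identities (ε : ℝ) (hε : ε ≠ 0) :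
    ∀ p : Fin 6 → ℝ,
      lieB vtolG1 (vtolG2 ε) p = 0 ∧
      lieB vtolG1 (lieB vtolG1 vtolF) p = 0 ∧
      lieB (vtolG2 ε) (lieB (vtolG2 ε) vtolF) p = (-(2 * ε)) • vtolG1 p := by
  intro p
  refine ⟨?_, ?_, ?_⟩
  · unfold lieB
    rw [(hasG1 p).fderiv, (hasG2 ε p).fderiv]
    funext i
    fin_cases i <;>
      simp [vtolG1, vtolG2, ContinuousLinearMap.pi_apply, cons_val_2', cons_val_3', cons_val_4', cons_val_5']
  · rw [lieB_g1f]
    unfold lieB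
    rw [(hasG1 p).fderiv, (hasB1 p).fderiv]
    funext i
    fin_cases i <;>
      simp [vtolG1, ContinuousLinearMap.pi_apply, cons_val_2', cons_val_3', cons_val_4', cons_val_5']
  · rw [lieB_g2f]
    unfold lieB
    rw [(hasG2 ε p).fderiv, (hasB2 ε p).fderiv]
    funext i
    fin_cases i <;>
      simp [vtolG1, vtolG2, ContinuousLinearMap.pi_apply, cons_val_2', cons_val_3', cons_val_4', cons_val_5'] <;> ring
end

section
/- For the planar VTOL aircraft model, let Δ be the distribution on ℝ⁶ spanned pointwise by X₁ = ∂vx, X₂ = ∂vz, X₃ = ∂ω and X₄ = ε cosθ∂x + ε sinθ∂z + ∂θ. Then: (i) Δ is involutive (all pairwise Lie brackets of X₁,…,X₄ vanish); (ii) at every point Δ = span{g₁, g₂, [f,g₂], [g₁,[f,g₂]]}, so Δ is the involutive closure of span{g₁, g₂, [f,g₂]}; (iii) a covector at a point annihilates Δ if and only if it lies in the span of the covectors dx − ε cosθ dθ and dz − ε sinθ dθ at that point. -/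
/-- The spanning vector fields `X₁ = ∂vx`, `X₂ = ∂vz`, `X₃ = ∂ω`,
`X₄ = ε cosθ ∂x + ε sinθ ∂z + ∂θ` of the distribution `Δ`. -/
noncomputable def vtolX (ε : ℝ) : Fin 4 → (Fin 6 → ℝ) → Fin 6 → ℝ :=
  ![fun _ => ![0, 0, 0, 1, 0, 0],
    fun _ => ![0, 0, 0, 0, 1, 0],
    fun _ => ![0, 0, 0, 0, 0, 1],
    fun p => ![ε * Real.cos (p 2), ε * Real.sin (p 2), 1, 0, 0, 0]]

/-- The covector field `dx − ε cosθ dθ`. -/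
noncomputable def vtolC1 (ε : ℝ) (p : Fin 6 → ℝ) : (Fin 6 → ℝ) →ₗ[ℝ] ℝ :=
  LinearMap.proj 0 - (ε * Real.cos (p 2)) • LinearMap.proj 2

/-- The covector field `dz − ε sinθ dθ`. -/
noncomputable def vtolC2 (ε : ℝ) (p : Fin 6 → ℝ) : (Fin 6 → ℝ) →ₗ[ℝ] ℝ :=
  LinearMap.proj 1 - (ε * Real.sin (p 2)) • LinearMap.proj 2

-- helpers

section vecsimp
variable {α : Type*} (a0 a1 a2 a3 a4 a5 : α)
@[simp] lemma vec6_0 : ![a0,a1,a2,a3,a4,a5] 0 = a0 := rfl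
@[simp] lemma vec6_1 : ![a0,a1,a2,a3,a4,a5] 1 = a1 := rfl
@[simp] lemma vec6_2 : ![a0,a1,a2,a3,a4,a5] 2 = a2 := rfl
@[simp] lemma vec6_3 : ![a0,a1,a2,a3,a4,a5] 3 = a3 := rfl
@[simp] lemma vec6_4 : ![a0,a1,a2,a3,a4,a5] 4 = a4 := rfl
@[simp] lemma vec6_5 : ![a0,a1,a2,a3,a4,a5] 5 = a5 := rfl
@[simp] lemma vec4_0 (b0 b1 b2 b3 : α) : ![b0,b1,b2,b3] 0 = b0 := rfl
@[simp] lemma vec4_1 (b0 b1 b2 b3 : α) : ![b0,b1,b2,b3] 1 = b1 := rfl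
@[simp] lemma vec4_2 (b0 b1 b2 b3 : α) : ![b0,b1,b2,b3] 2 = b2 := rfl
@[simp] lemma vec4_3 (b0 b1 b2 b3 : α) : ![b0,b1,b2,b3] 3 = b3 := rfl
@[simp] lemma vec4_mk0 (b0 b1 b2 b3 : α) (h : 0 < 4) : ![b0,b1,b2,b3] ⟨0,h⟩ = b0 := rfl
@[simp] lemma vec4_mk1 (b0 b1 b2 b3 : α) (h : 1 < 4) : ![b0,b1,b2,b3] ⟨1,h⟩ = b1 := rfl
@[simp] lemma vec4_mk2 (b0 b1 b2 b3 : α) (h : 2 < 4) : ![b0,b1,b2,b3] ⟨2,h⟩ = b2 := rfl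
@[simp] lemma vec4_mk3 (b0 b1 b2 b3 : α) (h : 3 < 4) : ![b0,b1,b2,b3] ⟨3,h⟩ = b3 := rfl
@[simp] lemma vec6_mk0 (h : 0 < 6) : ![a0,a1,a2,a3,a4,a5] ⟨0,h⟩ = a0 := rfl
@[simp] lemma vec6_mk1 (h : 1 < 6) : ![a0,a1,a2,a3,a4,a5] ⟨1,h⟩ = a1 := rfl
@[simp] lemma vec6_mk2 (h : 2 < 6) : ![a0,a1,a2,a3,a4,a5] ⟨2,h⟩ = a2 := rfl
@[simp] lemma vec6_mk3 (h : 3 < 6) : ![a0,a1,a2,a3,a4,a5] ⟨3,h⟩ = a3 := rfl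
@[simp] lemma vec6_mk4 (h : 4 < 6) : ![a0,a1,a2,a3,a4,a5] ⟨4,h⟩ = a4 := rfl
@[simp] lemma vec6_mk5 (h : 5 < 6) : ![a0,a1,a2,a3,a4,a5] ⟨5,h⟩ = a5 := rfl
end vecsimp

noncomputable def prj (i : Fin 6) : (Fin 6 → ℝ) →L[ℝ] ℝ := ContinuousLinearMap.proj i

lemma hproj (i : Fin 6) (p : Fin 6 → ℝ) : HasFDerivAt (fun q : Fin 6 → ℝ => q i) (prj i) p :=
  (ContinuousLinearMap.proj (R := ℝ) (φ := fun _ : Fin 6 => ℝ) i).hasFDerivAt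

lemma hcos (p : Fin 6 → ℝ) :
    HasFDerivAt (fun q : Fin 6 → ℝ => Real.cos (q 2)) ((-Real.sin (p 2)) • prj 2) p :=
  (hproj 2 p).cos

lemma hsin (p : Fin 6 → ℝ) :
    HasFDerivAt (fun q : Fin 6 → ℝ => Real.sin (q 2)) ((Real.cos (p 2)) • prj 2) p :=
  (hproj 2 p).sin

lemma hF (p : Fin 6 → ℝ) :
    HasFDerivAt vtolF (ContinuousLinearMap.pi ![prj 3, prj 4, prj 5, 0, 0, 0]) p := by
  apply hasFDerivAt_pi''
  intro i
  rw [ContinuousLinearMap.proj_pi]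
  fin_cases i <;> simp only [vtolF, Matrix.cons_val_zero, Matrix.cons_val_one, Matrix.head_cons,
    Matrix.cons_val_fin_one, Matrix.cons_val_succ] <;>
    first
      | exact hasFDerivAt_const _ _
      | exact hproj _ p

lemma hG1 (p : Fin 6 → ℝ) :
    HasFDerivAt vtolG1 (ContinuousLinearMap.pi
      ![0, 0, 0, -((Real.cos (p 2)) • prj 2), (-Real.sin (p 2)) • prj 2, 0]) p := by
  apply hasFDerivAt_pi''
  intro i
  rw [ContinuousLinearMap.proj_pi]
  fin_cases i <;> simp only [vtolG1, Matrix.cons_val_zero, Matrix.cons_val_one, Matrix.head_cons,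
    Matrix.cons_val_fin_one, Matrix.cons_val_succ] <;>
    first
      | exact hasFDerivAt_const _ _
      | exact (hsin p).neg
      | exact hcos p

lemma hG2 (ε : ℝ) (p : Fin 6 → ℝ) :
    HasFDerivAt (vtolG2 ε) (ContinuousLinearMap.pi
      ![0, 0, 0, ε • ((-Real.sin (p 2)) • prj 2), ε • ((Real.cos (p 2)) • prj 2), 0]) p := by
  apply hasFDerivAt_pi''
  intro i
  rw [ContinuousLinearMap.proj_pi]
  fin_cases i <;> simp only [vtolG2, Matrix.cons_val_zero, Matrix.cons_val_one, Matrix.head_cons,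
    Matrix.cons_val_fin_one, Matrix.cons_val_succ] <;>
    first
      | exact hasFDerivAt_const _ _
      | exact (hcos p).const_mul ε
      | exact (hsin p).const_mul ε

lemma hX4 (ε : ℝ) (p : Fin 6 → ℝ) :
    HasFDerivAt (fun q : Fin 6 → ℝ =>
        ![ε * Real.cos (q 2), ε * Real.sin (q 2), (1:ℝ), 0, 0, 0])
      (ContinuousLinearMap.pi
        ![ε • ((-Real.sin (p 2)) • prj 2), ε • ((Real.cos (p 2)) • prj 2), 0, 0, 0, 0]) p := by
  apply hasFDerivAt_pi''
  intro i
  rw [ContinuousLinearMap.proj_pi]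
  fin_cases i <;> simp only [Matrix.cons_val_zero, Matrix.cons_val_one, Matrix.head_cons,
    Matrix.cons_val_fin_one, Matrix.cons_val_succ] <;>
    first
      | exact hasFDerivAt_const _ _
      | exact (hcos p).const_mul ε
      | exact (hsin p).const_mul ε

-- the bracket [f, g₂]
noncomputable def vtolH (ε : ℝ) (p : Fin 6 → ℝ) : Fin 6 → ℝ :=
  ![-(ε * Real.cos (p 2)), -(ε * Real.sin (p 2)), -1,
    ε * (-Real.sin (p 2) * p 5), ε * (Real.cos (p 2) * p 5), 0]

lemma lieB_F_G2 (ε : ℝ) : lieB vtolF (vtolG2 ε) = vtolH ε := by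
  funext p
  show fderiv ℝ (vtolG2 ε) p (vtolF p) - fderiv ℝ vtolF p (vtolG2 ε p) = vtolH ε p
  rw [(hG2 ε p).fderiv, (hF p).fderiv]
  funext i
  fin_cases i <;>
    simp [vtolF, vtolG2, vtolH, prj, ContinuousLinearMap.pi_apply] <;> ring

lemma hH (ε : ℝ) (p : Fin 6 → ℝ) :
    HasFDerivAt (vtolH ε) (ContinuousLinearMap.pi
      ![-(ε • ((-Real.sin (p 2)) • prj 2)), -(ε • (Real.cos (p 2) • prj 2)), 0,
        ε • ((-Real.sin (p 2)) • prj 5 + p 5 • (-(Real.cos (p 2) • prj 2))),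
        ε • (Real.cos (p 2) • prj 5 + p 5 • ((-Real.sin (p 2)) • prj 2)), 0]) p := by
  apply hasFDerivAt_pi''
  intro i
  rw [ContinuousLinearMap.proj_pi]
  fin_cases i <;> simp only [vtolH, vec6_0, vec6_1, vec6_2, vec6_3, vec6_4, vec6_5] <;>
    first
      | exact hasFDerivAt_const _ _
      | exact ((hcos p).const_mul ε).neg
      | exact ((hsin p).const_mul ε).neg
      | exact ((hsin p).neg.mul (hproj 5 p)).const_mul ε
      | exact ((hcos p).mul (hproj 5 p)).const_mul ε

noncomputable def vtolK (p : Fin 6 → ℝ) : Fin 6 → ℝ :=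
  ![0, 0, 0, -Real.cos (p 2), -Real.sin (p 2), 0]

lemma lieB_G1_H (ε : ℝ) : lieB vtolG1 (vtolH ε) = vtolK := by
  funext p
  show fderiv ℝ (vtolH ε) p (vtolG1 p) - fderiv ℝ vtolG1 p (vtolH ε p) = vtolK p
  rw [(hH ε p).fderiv, (hG1 p).fderiv]
  funext i
  fin_cases i <;>
    simp [vtolG1, vtolH, vtolK, prj, ContinuousLinearMap.pi_apply] <;> ring

lemma lieB_self {E : Type*} [NormedAddCommGroup E] [NormedSpace ℝ E] (v : E → E) (p : E) :
    lieB v v p = 0 := sub_self _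

lemma lieB_const_const (c d : Fin 6 → ℝ) (p : Fin 6 → ℝ) :
    lieB (fun _ => c) (fun _ => d) p = 0 := by
  simp [lieB]

lemma lieB_const_X4 (ε : ℝ) (c : Fin 6 → ℝ) (hc : c 2 = 0) (p : Fin 6 → ℝ) :
    lieB (fun _ => c)
      (fun q : Fin 6 → ℝ => ![ε * Real.cos (q 2), ε * Real.sin (q 2), (1:ℝ), 0, 0, 0]) p = 0 := by
  show fderiv ℝ _ p _ - fderiv ℝ _ p _ = 0
  rw [(hX4 ε p).fderiv, fderiv_fun_const]
  funext i
  fin_cases i <;> simp [prj, hc, ContinuousLinearMap.pi_apply]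

lemma lieB_X4_const (ε : ℝ) (c : Fin 6 → ℝ) (hc : c 2 = 0) (p : Fin 6 → ℝ) :
    lieB (fun q : Fin 6 → ℝ => ![ε * Real.cos (q 2), ε * Real.sin (q 2), (1:ℝ), 0, 0, 0])
      (fun _ => c) p = 0 := by
  show fderiv ℝ _ p _ - fderiv ℝ _ p _ = 0
  rw [(hX4 ε p).fderiv, fderiv_fun_const]
  funext i
  fin_cases i <;> simp [prj, hc, ContinuousLinearMap.pi_apply]

lemma part1 (ε : ℝ) (p : Fin 6 → ℝ) (i j : Fin 4) : lieB (vtolX ε i) (vtolX ε j) p = 0 := by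
  fin_cases i <;> fin_cases j <;> simp only [vtolX, Fin.isValue, Matrix.cons_val_zero,
    Matrix.cons_val_one, Matrix.head_cons, Matrix.cons_val_succ, Matrix.cons_val_fin_one]
  · exact lieB_self _ _
  · exact lieB_const_const _ _ _
  · exact lieB_const_const _ _ _
  · exact lieB_const_X4 ε _ rfl p
  · exact lieB_const_const _ _ _
  · exact lieB_self _ _
  · exact lieB_const_const _ _ _
  · exact lieB_const_X4 ε _ rfl p
  · exact lieB_const_const _ _ _
  · exact lieB_const_const _ _ _
  · exact lieB_self _ _
  · exact lieB_const_X4 ε _ rfl p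
  · exact lieB_X4_const ε _ rfl p
  · exact lieB_X4_const ε _ rfl p
  · exact lieB_X4_const ε _ rfl p
  · exact lieB_self _ _

lemma part2 (ε : ℝ) (p : Fin 6 → ℝ) :
    Submodule.span ℝ (Set.range fun i : Fin 4 => vtolX ε i p) =
      Submodule.span ℝ
        ({vtolG1 p, vtolG2 ε p, lieB vtolF (vtolG2 ε) p,
          lieB vtolG1 (lieB vtolF (vtolG2 ε)) p} : Set (Fin 6 → ℝ)) := by
  rw [lieB_F_G2, lieB_G1_H]
  set S := Submodule.span ℝ
      ({vtolG1 p, vtolG2 ε p, vtolH ε p, vtolK p} : Set (Fin 6 → ℝ)) with hS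
  have hg1 : vtolG1 p ∈ S := Submodule.subset_span (by simp)
  have hg2 : vtolG2 ε p ∈ S := Submodule.subset_span (by simp)
  have hh : vtolH ε p ∈ S := Submodule.subset_span (by simp)
  have hk : vtolK p ∈ S := Submodule.subset_span (by simp)
  have hX : ∀ i : Fin 4, vtolX ε i p ∈ Submodule.span ℝ
      (Set.range fun i : Fin 4 => vtolX ε i p) :=
    fun i => Submodule.subset_span ⟨i, rfl⟩
  apply le_antisymm
  · rw [Submodule.span_le, Set.range_subset_iff]
    intro i
    fin_cases i <;> simp only [vtolX, Fin.isValue, vec4_mk0, vec4_mk1, vec4_mk2, vec4_mk3,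
      vec4_0, vec4_1, vec4_2, vec4_3, SetLike.mem_coe]
    · have e : (![0, 0, 0, 1, 0, 0] : Fin 6 → ℝ)
          = (-Real.sin (p 2)) • vtolG1 p + (-Real.cos (p 2)) • vtolK p := by
        funext i
        fin_cases i <;>
          simp [vtolG1, vtolK, Matrix.vecHead, Matrix.vecTail] <;>
          linarith [Real.sin_sq_add_cos_sq (p 2)]
      rw [e]
      exact Submodule.add_mem _ (Submodule.smul_mem _ _ hg1) (Submodule.smul_mem _ _ hk)
    · have e : (![0, 0, 0, 0, 1, 0] : Fin 6 → ℝ)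
          = (Real.cos (p 2)) • vtolG1 p + (-Real.sin (p 2)) • vtolK p := by
        funext i
        fin_cases i <;>
          simp [vtolG1, vtolK, Matrix.vecHead, Matrix.vecTail] <;>
          linarith [Real.sin_sq_add_cos_sq (p 2)]
      rw [e]
      exact Submodule.add_mem _ (Submodule.smul_mem _ _ hg1) (Submodule.smul_mem _ _ hk)
    · have e : (![0, 0, 0, 0, 0, 1] : Fin 6 → ℝ) = vtolG2 ε p + ε • vtolK p := by
        funext i
        fin_cases i <;>
          simp [vtolG2, vtolK, Matrix.vecHead, Matrix.vecTail] <;> ring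
      rw [e]
      exact Submodule.add_mem _ hg2 (Submodule.smul_mem _ _ hk)
    · have e : (![ε * Real.cos (p 2), ε * Real.sin (p 2), 1, 0, 0, 0] : Fin 6 → ℝ)
          = (-1 : ℝ) • vtolH ε p + (ε * p 5) • vtolG1 p := by
        funext i
        fin_cases i <;>
          simp [vtolH, vtolG1, Matrix.vecHead, Matrix.vecTail] <;> ring
      rw [e]
      exact Submodule.add_mem _ (Submodule.smul_mem _ _ hh) (Submodule.smul_mem _ _ hg1)
  · rw [Submodule.span_le]
    intro x hx
    simp only [Set.mem_insert_iff, Set.mem_singleton_iff] at hx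
    rcases hx with rfl | rfl | rfl | rfl
    · have e : vtolG1 p
          = (-Real.sin (p 2)) • vtolX ε 0 p + (Real.cos (p 2)) • vtolX ε 1 p := by
        funext i
        fin_cases i <;>
          simp [vtolX, vtolG1, Matrix.vecHead, Matrix.vecTail]
      rw [e]
      exact Submodule.add_mem _ (Submodule.smul_mem _ _ (hX 0)) (Submodule.smul_mem _ _ (hX 1))
    · have e : vtolG2 ε p = (ε * Real.cos (p 2)) • vtolX ε 0 p
          + (ε * Real.sin (p 2)) • vtolX ε 1 p + vtolX ε 2 p := by
        funext i
        fin_cases i <;>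
          simp [vtolX, vtolG2, Matrix.vecHead, Matrix.vecTail]
      rw [e]
      exact Submodule.add_mem _
        (Submodule.add_mem _ (Submodule.smul_mem _ _ (hX 0)) (Submodule.smul_mem _ _ (hX 1)))
        (hX 2)
    · have e : vtolH ε p = (ε * (-Real.sin (p 2) * p 5)) • vtolX ε 0 p
          + (ε * (Real.cos (p 2) * p 5)) • vtolX ε 1 p + (-1 : ℝ) • vtolX ε 3 p := by
        funext i
        fin_cases i <;>
          simp [vtolX, vtolH, Matrix.vecHead, Matrix.vecTail] <;> ring
      rw [e]
      exact Submodule.add_mem _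
        (Submodule.add_mem _ (Submodule.smul_mem _ _ (hX 0)) (Submodule.smul_mem _ _ (hX 1)))
        (Submodule.smul_mem _ _ (hX 3))
    · have e : vtolK p
          = (-Real.cos (p 2)) • vtolX ε 0 p + (-Real.sin (p 2)) • vtolX ε 1 p := by
        funext i
        fin_cases i <;>
          simp [vtolX, vtolK, Matrix.vecHead, Matrix.vecTail]
      rw [e]
      exact Submodule.add_mem _ (Submodule.smul_mem _ _ (hX 0)) (Submodule.smul_mem _ _ (hX 1))



lemma Xsingle0 (ε : ℝ) (p : Fin 6 → ℝ) : vtolX ε 0 p = Pi.single (3 : Fin 6) (1:ℝ) := by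
  funext i; fin_cases i <;> simp [vtolX, Pi.single_apply]

lemma Xsingle1 (ε : ℝ) (p : Fin 6 → ℝ) : vtolX ε 1 p = Pi.single (4 : Fin 6) (1:ℝ) := by
  funext i; fin_cases i <;> simp [vtolX, Pi.single_apply]

lemma Xsingle2 (ε : ℝ) (p : Fin 6 → ℝ) : vtolX ε 2 p = Pi.single (5 : Fin 6) (1:ℝ) := by
  funext i; fin_cases i <;> simp [vtolX, Pi.single_apply, Matrix.vecHead, Matrix.vecTail]

lemma Xsingle3 (ε : ℝ) (p : Fin 6 → ℝ) : vtolX ε 3 p =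
    (ε * Real.cos (p 2)) • (Pi.single (0 : Fin 6) (1:ℝ) : Fin 6 → ℝ)
      + (ε * Real.sin (p 2)) • (Pi.single (1 : Fin 6) (1:ℝ) : Fin 6 → ℝ)
      + (Pi.single (2 : Fin 6) (1:ℝ) : Fin 6 → ℝ) := by
  funext i; fin_cases i <;> simp [vtolX, Pi.single_apply, Matrix.vecHead, Matrix.vecTail]

lemma part3 (ε : ℝ) (p : Fin 6 → ℝ) (η : (Fin 6 → ℝ) →ₗ[ℝ] ℝ) :
    (∀ w ∈ Submodule.span ℝ (Set.range fun i : Fin 4 => vtolX ε i p), η w = 0) ↔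
      η ∈ Submodule.span ℝ ({vtolC1 ε p, vtolC2 ε p} : Set ((Fin 6 → ℝ) →ₗ[ℝ] ℝ)) := by
  constructor
  · intro h
    have hX : ∀ i : Fin 4, η (vtolX ε i p) = 0 :=
      fun i => h _ (Submodule.subset_span ⟨i, rfl⟩)
    have h3 : η (Pi.single (3 : Fin 6) (1:ℝ)) = 0 := by rw [← Xsingle0 ε p]; exact hX 0
    have h4 : η (Pi.single (4 : Fin 6) (1:ℝ)) = 0 := by rw [← Xsingle1 ε p]; exact hX 1
    have h5 : η (Pi.single (5 : Fin 6) (1:ℝ)) = 0 := by rw [← Xsingle2 ε p]; exact hX 2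
    have h2 : η (Pi.single (2 : Fin 6) (1:ℝ)) =
        -(ε * Real.cos (p 2)) * η (Pi.single (0 : Fin 6) (1:ℝ))
          - (ε * Real.sin (p 2)) * η (Pi.single (1 : Fin 6) (1:ℝ)) := by
      have := hX 3
      rw [Xsingle3 ε p] at this
      simp only [map_add, map_smul, smul_eq_mul] at this
      linarith
    rw [Submodule.mem_span_pair]
    refine ⟨η (Pi.single (0 : Fin 6) (1:ℝ)), η (Pi.single (1 : Fin 6) (1:ℝ)), ?_⟩
    apply (Pi.basisFun ℝ (Fin 6)).ext
    intro i
    fin_cases i <;>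
      simp [vtolC1, vtolC2, Pi.single_apply, h2, h3, h4, h5] <;> ring
  · intro hη w hw
    rw [Submodule.mem_span_pair] at hη
    obtain ⟨a, b, rfl⟩ := hη
    induction hw using Submodule.span_induction with
    | mem x hx =>
      obtain ⟨i, rfl⟩ := hx
      fin_cases i <;>
        simp [vtolX, vtolC1, vtolC2, Matrix.vecHead, Matrix.vecTail] <;> ring
    | zero => simp
    | add x y _ _ hx hy => rw [map_add, hx, hy, add_zero]
    | smul c x _ hx => rw [map_smul, hx, smul_zero]

/-- For the planar VTOL aircraft, the distribution `Δ = span{X₁, X₂, X₃, X₄}`: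
(i) is involutive (all pairwise brackets of the `Xᵢ` vanish);
(ii) equals `span{g₁, g₂, [f,g₂], [g₁,[f,g₂]]}` at every point, so it is the involutive
closure of `span{g₁, g₂, [f,g₂]}`;
(iii) its pointwise annihilator is spanned by `dx − ε cosθ dθ` and `dz − ε sinθ dθ`. -/
theorem vtol_involutive_closure (ε : ℝ) (hε : ε ≠ 0) :
    (∀ (p : Fin 6 → ℝ) (i j : Fin 4), lieB (vtolX ε i) (vtolX ε j) p = 0) ∧
    (∀ p : Fin 6 → ℝ,
      Submodule.span ℝ (Set.range fun i : Fin 4 => vtolX ε i p) =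
        Submodule.span ℝ
          ({vtolG1 p, vtolG2 ε p, lieB vtolF (vtolG2 ε) p,
            lieB vtolG1 (lieB vtolF (vtolG2 ε)) p} : Set (Fin 6 → ℝ))) ∧
    (∀ (p : Fin 6 → ℝ) (η : (Fin 6 → ℝ) →ₗ[ℝ] ℝ),
      (∀ w ∈ Submodule.span ℝ (Set.range fun i : Fin 4 => vtolX ε i p), η w = 0) ↔
        η ∈ Submodule.span ℝ ({vtolC1 ε p, vtolC2 ε p} : Set ((Fin 6 → ℝ) →ₗ[ℝ] ℝ))) := by
  exact ⟨fun p i j => part1 ε p i j, fun p => part2 ε p, fun p η => part3 ε p η⟩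
end

section
/- Along any smooth solution t ↦ (x,z,θ,vx,vz,ω,u¹,u²)(t) of the planar VTOL aircraft model, define y¹ = x − ε sinθ and y² = z + ε cosθ (the functions whose differentials span the annihilator dx − ε cosθ dθ, dz − ε sinθ dθ). Then for all t: (y¹)'' = sinθ·(εω² − u¹) and (y²)'' = −cosθ·(εω² − u¹) − 1; consequently (y¹)''·cosθ + ((y²)'' + 1)·sinθ = 0 and ((y¹)'')² + ((y²)'' + 1)² = (u¹ − εω²)². -/
/-- Along any smooth solution of the planar VTOL aircraft model, the functions
`y¹ = x − ε sinθ` and `y² = z + ε cosθ` satisfy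
`(y¹)'' = sinθ·(εω² − u¹)` and `(y²)'' = −cosθ·(εω² − u¹) − 1`; consequently
`(y¹)''·cosθ + ((y²)'' + 1)·sinθ = 0` and `((y¹)'')² + ((y²)'' + 1)² = (u¹ − εω²)²`. -/
theorem vtol_flat_output_second_derivatives
    (ε : ℝ) (hε : ε ≠ 0)
    (x z θ vx vz ω u1 u2 : ℝ → ℝ)
    (hx : ContDiff ℝ (⊤ : ℕ∞) x) (hz : ContDiff ℝ (⊤ : ℕ∞) z)
    (hθ : ContDiff ℝ (⊤ : ℕ∞) θ) (hvx : ContDiff ℝ (⊤ : ℕ∞) vx)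
    (hvz : ContDiff ℝ (⊤ : ℕ∞) vz) (hω : ContDiff ℝ (⊤ : ℕ∞) ω)
    (hu1 : ContDiff ℝ (⊤ : ℕ∞) u1) (hu2 : ContDiff ℝ (⊤ : ℕ∞) u2)
    (ode1 : ∀ t, deriv x t = vx t)
    (ode2 : ∀ t, deriv z t = vz t)
    (ode3 : ∀ t, deriv θ t = ω t)
    (ode4 : ∀ t, deriv vx t = ε * Real.cos (θ t) * u2 t - Real.sin (θ t) * u1 t)
    (ode5 : ∀ t, deriv vz t = Real.cos (θ t) * u1 t + ε * Real.sin (θ t) * u2 t - 1)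
    (ode6 : ∀ t, deriv ω t = u2 t) :
    ∀ t,
      deriv (deriv (fun s => x s - ε * Real.sin (θ s))) t =
        Real.sin (θ t) * (ε * (ω t) ^ 2 - u1 t) ∧
      deriv (deriv (fun s => z s + ε * Real.cos (θ s))) t =
        -Real.cos (θ t) * (ε * (ω t) ^ 2 - u1 t) - 1 ∧
      deriv (deriv (fun s => x s - ε * Real.sin (θ s))) t * Real.cos (θ t) +
        (deriv (deriv (fun s => z s + ε * Real.cos (θ s))) t + 1) * Real.sin (θ t) = 0 ∧
      (deriv (deriv (fun s => x s - ε * Real.sin (θ s))) t) ^ 2 +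
        (deriv (deriv (fun s => z s + ε * Real.cos (θ s))) t + 1) ^ 2 =
        (u1 t - ε * (ω t) ^ 2) ^ 2 := by

  have hdx := hx.differentiable (by norm_num)
  have hdz := hz.differentiable (by norm_num)
  have hdθ := hθ.differentiable (by norm_num)
  have hdvx := hvx.differentiable (by norm_num)
  have hdvz := hvz.differentiable (by norm_num)
  have hdω := hω.differentiable (by norm_num)
  have hθt : ∀ t, HasDerivAt θ (ω t) t := fun t => by
    have := (hdθ t).hasDerivAt; rwa [ode3 t] at this
  have hωt : ∀ t, HasDerivAt ω (u2 t) t := fun t => by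
    have := (hdω t).hasDerivAt; rwa [ode6 t] at this
  have hsin : ∀ t, HasDerivAt (fun s => Real.sin (θ s)) (Real.cos (θ t) * ω t) t :=
    fun t => (Real.hasDerivAt_sin (θ t)).comp t (hθt t)
  have hcos : ∀ t, HasDerivAt (fun s => Real.cos (θ s)) (-Real.sin (θ t) * ω t) t :=
    fun t => (Real.hasDerivAt_cos (θ t)).comp t (hθt t)
  have h1 : deriv (fun s => x s - ε * Real.sin (θ s))
      = fun t => vx t - ε * (Real.cos (θ t) * ω t) := by
    funext t
    have hxt : HasDerivAt x (vx t) t := by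
      have := (hdx t).hasDerivAt; rwa [ode1 t] at this
    exact (hxt.sub ((hsin t).const_mul ε)).deriv
  have h2 : deriv (fun s => z s + ε * Real.cos (θ s))
      = fun t => vz t + ε * (-Real.sin (θ t) * ω t) := by
    funext t
    have hzt : HasDerivAt z (vz t) t := by
      have := (hdz t).hasDerivAt; rwa [ode2 t] at this
    exact (hzt.add ((hcos t).const_mul ε)).deriv
  intro t
  have hvxt : HasDerivAt vx (ε * Real.cos (θ t) * u2 t - Real.sin (θ t) * u1 t) t := by
    have := (hdvx t).hasDerivAt; rwa [ode4 t] at this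
  have hvzt : HasDerivAt vz (Real.cos (θ t) * u1 t + ε * Real.sin (θ t) * u2 t - 1) t := by
    have := (hdvz t).hasDerivAt; rwa [ode5 t] at this
  have hy1 : deriv (deriv (fun s => x s - ε * Real.sin (θ s))) t
      = Real.sin (θ t) * (ε * (ω t) ^ 2 - u1 t) := by
    rw [h1]
    have hd : HasDerivAt (fun t => vx t - ε * (Real.cos (θ t) * ω t))
        ((ε * Real.cos (θ t) * u2 t - Real.sin (θ t) * u1 t)
          - ε * ((-Real.sin (θ t) * ω t) * ω t + Real.cos (θ t) * u2 t)) t :=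
      hvxt.sub (((hcos t).mul (hωt t)).const_mul ε)
    rw [hd.deriv]; ring
  have hy2 : deriv (deriv (fun s => z s + ε * Real.cos (θ s))) t
      = -Real.cos (θ t) * (ε * (ω t) ^ 2 - u1 t) - 1 := by
    rw [h2]
    have hd : HasDerivAt (fun t => vz t + ε * (-Real.sin (θ t) * ω t))
        ((Real.cos (θ t) * u1 t + ε * Real.sin (θ t) * u2 t - 1)
          + ε * ((-(Real.cos (θ t) * ω t)) * ω t + -Real.sin (θ t) * u2 t)) t :=
      hvzt.add ((((hsin t).neg).mul (hωt t)).const_mul ε)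
    rw [hd.deriv]; ring
  refine ⟨hy1, hy2, ?_, ?_⟩
  · rw [hy1, hy2]; ring
  · rw [hy1, hy2]
    have := Real.sin_sq_add_cos_sq (θ t)
    nlinarith [this]
end

section
/- For the vector fields a, b₁, b₂ of Example 3 on ℝ⁷, at every point p ∈ ℝ⁷ the vector (z²∂₃ + ∂₄)(p) = [b₁,[b₁,a]](p) does not belong to span{b₁(p), b₂(p), [b₁,a](p), [b₂,a](p)}. (Hence the distribution D₂ = span{b₁, b₂, [a,b₁], [a,b₂]} is non-involutive, and in the quadratic necessary condition with v₁ = b₁, v₂ = b₂ every solution has α¹ = 0, so v_c = b₂ is, up to scale, the unique candidate.) -/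
/-- Drift vector field of Example 3:
`a = z²∂₁ + z⁴∂₃ + z⁵∂₄ + z⁶∂₅ + z⁷∂₆` (coordinates zero-based). -/
noncomputable def ex3A (z : Fin 7 → ℝ) : Fin 7 → ℝ :=
  ![z 1, 0, z 3, z 4, z 5, z 6, 0]

/-- First input vector field of Example 3: `b₁ = ∂₂ + z⁵∂₄ + z²∂₅`. -/
noncomputable def ex3B1 (z : Fin 7 → ℝ) : Fin 7 → ℝ :=
  ![0, 1, 0, z 4, z 1, 0, 0]

/-- Second input vector field of Example 3: `b₂ = ∂₇`. -/
noncomputable def ex3B2 (_ : Fin 7 → ℝ) : Fin 7 → ℝ :=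
  ![0, 0, 0, 0, 0, 0, 1]

lemma cons_val_five' {α : Type*} (a b c d e f g : α) : ![a, b, c, d, e, f, g] 5 = f := rfl

lemma cons_val_six' {α : Type*} (a b c d e f g : α) : ![a, b, c, d, e, f, g] 6 = g := rfl

/-- Derivative of `ex3A` (which is linear). -/
noncomputable def LA : (Fin 7 → ℝ) →L[ℝ] (Fin 7 → ℝ) :=
  ContinuousLinearMap.pi
    ![ContinuousLinearMap.proj 1, 0, ContinuousLinearMap.proj 3,
      ContinuousLinearMap.proj 4, ContinuousLinearMap.proj 5,
      ContinuousLinearMap.proj 6, 0]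

/-- Derivative of `ex3B1` (which is affine). -/
noncomputable def LB : (Fin 7 → ℝ) →L[ℝ] (Fin 7 → ℝ) :=
  ContinuousLinearMap.pi
    ![0, 0, 0, ContinuousLinearMap.proj 4, ContinuousLinearMap.proj 1, 0, 0]

/-- Derivative of `[b₁,a]` (which is affine). -/
noncomputable def LC : (Fin 7 → ℝ) →L[ℝ] (Fin 7 → ℝ) :=
  ContinuousLinearMap.pi
    ![0, 0, ContinuousLinearMap.proj 4,
      (ContinuousLinearMap.proj 1 : (Fin 7 → ℝ) →L[ℝ] ℝ)
        - (ContinuousLinearMap.proj 5 : (Fin 7 → ℝ) →L[ℝ] ℝ), 0, 0, 0]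

lemma ex3A_eq : ex3A = ⇑LA := by
  funext z i
  fin_cases i <;> simp [ex3A, LA, cons_val_five', cons_val_six']

lemma fderiv_ex3A (p : Fin 7 → ℝ) : fderiv ℝ ex3A p = LA := by
  rw [ex3A_eq]; exact LA.fderiv

lemma fderiv_ex3B1 (p : Fin 7 → ℝ) : fderiv ℝ ex3B1 p = LB := by
  have h : ex3B1 = fun z => ![0,1,0,0,0,0,0] + LB z := by
    funext z i; fin_cases i <;> simp [ex3B1, LB, cons_val_five', cons_val_six']
  rw [h]
  exact ((LB.hasFDerivAt (x := p)).const_add _).fderiv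

lemma fderiv_ex3B2 (p : Fin 7 → ℝ) : fderiv ℝ ex3B2 p = 0 := by
  have h : ex3B2 = fun _ => ![0,0,0,0,0,0,1] := rfl
  rw [h]; exact fderiv_const_apply _

lemma b1a_eq (p : Fin 7 → ℝ) :
    lieB ex3B1 ex3A p = ![1, 0, p 4, p 1 - p 5, 0, 0, 0] := by
  funext i
  simp only [lieB, fderiv_ex3A, fderiv_ex3B1]
  fin_cases i <;> simp [LA, LB, ex3A, ex3B1, cons_val_five', cons_val_six']

lemma b2a_eq (p : Fin 7 → ℝ) : lieB ex3B2 ex3A p = ![0, 0, 0, 0, 0, 1, 0] := by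
  funext i
  simp only [lieB, fderiv_ex3A, fderiv_ex3B2]
  fin_cases i <;> simp [LA, ex3B2, cons_val_five', cons_val_six']

lemma fderiv_inner (p : Fin 7 → ℝ) : fderiv ℝ (lieB ex3B1 ex3A) p = LC := by
  have h : lieB ex3B1 ex3A = fun z => ![1,0,0,0,0,0,0] + LC z := by
    funext z i
    rw [b1a_eq]
    fin_cases i <;> simp [LC, cons_val_five', cons_val_six']
  rw [h]
  exact ((LC.hasFDerivAt (x := p)).const_add _).fderiv

lemma b1b1a_eq (p : Fin 7 → ℝ) :
    lieB ex3B1 (lieB ex3B1 ex3A) p = ![0, 0, p 1, 1, 0, 0, 0] := by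
  show fderiv ℝ (lieB ex3B1 ex3A) p (ex3B1 p)
      - fderiv ℝ ex3B1 p (lieB ex3B1 ex3A p) = _
  rw [fderiv_inner, fderiv_ex3B1, b1a_eq]
  funext i
  fin_cases i <;> simp [LB, LC, ex3B1, cons_val_five', cons_val_six']

/-- For Example 3, at every point `p ∈ ℝ⁷` the vector
`(z²∂₃ + ∂₄)(p) = [b₁,[b₁,a]](p)` does not belong to
`span{b₁(p), b₂(p), [b₁,a](p), [b₂,a](p)}`; hence the distribution
`D₂ = span{b₁, b₂, [a,b₁], [a,b₂]}` is non-involutive, and in the quadratic necessary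
condition with `v₁ = b₁`, `v₂ = b₂` every solution has `α¹ = 0`, so `v_c = b₂` is, up
to scale, the unique candidate. -/
theorem example3_D2_noninvolutive :
    ∀ p : Fin 7 → ℝ,
      lieB ex3B1 (lieB ex3B1 ex3A) p = ![0, 0, p 1, 1, 0, 0, 0] ∧
      (![0, 0, p 1, 1, 0, 0, 0] : Fin 7 → ℝ) ∉
        Submodule.span ℝ
          ({ex3B1 p, ex3B2 p, lieB ex3B1 ex3A p, lieB ex3B2 ex3A p} :
            Set (Fin 7 → ℝ)) := by
  intro p
  refine ⟨b1b1a_eq p, ?_⟩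
  intro h
  rw [b1a_eq, b2a_eq] at h
  set φ : (Fin 7 → ℝ) →ₗ[ℝ] ℝ :=
    (LinearMap.proj 3 : (Fin 7 → ℝ) →ₗ[ℝ] ℝ)
      - (p 1 - p 5) • (LinearMap.proj 0 : (Fin 7 → ℝ) →ₗ[ℝ] ℝ)
      - p 4 • (LinearMap.proj 1 : (Fin 7 → ℝ) →ₗ[ℝ] ℝ) with hφ
  have hsub : ({ex3B1 p, ex3B2 p, ![1, 0, p 4, p 1 - p 5, 0, 0, 0],
      ![0, 0, 0, 0, 0, 1, 0]} : Set (Fin 7 → ℝ))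
      ⊆ (LinearMap.ker φ : Submodule ℝ (Fin 7 → ℝ)) := by
    intro x hx
    simp only [Set.mem_insert_iff, Set.mem_singleton_iff] at hx
    rcases hx with rfl | rfl | rfl | rfl <;>
      simp [hφ, ex3B1, ex3B2, cons_val_five', cons_val_six']
  have hmem := Submodule.span_le.mpr hsub h
  simp [hφ, cons_val_five', cons_val_six'] at hmem
end

section
/- For the vector fields of Example 3 on ℝ⁷, define the pointwise span D₃(p) = span{b₁(p), ∂₇, ∂₆, ∂₅, (∂₁ + z⁵∂₃ + (z² − z⁶)∂₄)(p)}. Let p ∈ ℝ⁷ be a point with z²(p) ≠ 0 and let α¹, α² ∈ ℝ. Then (α¹)²·(z²∂₃ + ∂₄)(p) − 2α¹α²·∂₄ ∈ D₃(p) if and only if α¹ = 0. (This identifies v_c = ∂₆, i.e., α¹ = 0, α² = 1, as the unique candidate, up to scale, in step 3 of the refined algorithm applied to Example 3, since (z²∂₃+∂₄) = [b₁,[b₁,a]], −∂₄ = [b₁,[∂₆,a]] and [∂₆,[∂₆,a]] = 0.) -/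
/-- For Example 3, let `D₃(p) = span{b₁(p), ∂₇, ∂₆, ∂₅, (∂₁ + z⁵∂₃ + (z²−z⁶)∂₄)(p)}`.
At every point `p` with `z²(p) ≠ 0` and for all `α¹, α² ∈ ℝ`:
`(α¹)²·(z²∂₃ + ∂₄)(p) − 2α¹α²·∂₄ ∈ D₃(p)` if and only if `α¹ = 0`.
(This identifies `v_c = ∂₆`, i.e. `α¹ = 0, α² = 1`, as the unique candidate up to
scale in step 3 of the refined algorithm, since `(z²∂₃+∂₄) = [b₁,[b₁,a]]`,
`−∂₄ = [b₁,[∂₆,a]]` and `[∂₆,[∂₆,a]] = 0`.) -/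
theorem example3_step3_candidate
    (p : Fin 7 → ℝ) (hp : p 1 ≠ 0) (α1 α2 : ℝ) :
    (α1 ^ 2 • (![0, 0, p 1, 1, 0, 0, 0] : Fin 7 → ℝ) -
        (2 * α1 * α2) • (![0, 0, 0, 1, 0, 0, 0] : Fin 7 → ℝ)) ∈
      Submodule.span ℝ
        ({ex3B1 p,
          ![0, 0, 0, 0, 0, 0, 1],
          ![0, 0, 0, 0, 0, 1, 0],
          ![0, 0, 0, 0, 1, 0, 0],
          ![1, 0, p 4, p 1 - p 5, 0, 0, 0]} : Set (Fin 7 → ℝ))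
      ↔ α1 = 0 := by
  constructor
  · intro h
    set φ : (Fin 7 → ℝ) →ₗ[ℝ] ℝ :=
      LinearMap.proj 2 - (p 4) • LinearMap.proj 0 with hφ
    have hker : Submodule.span ℝ
        ({ex3B1 p,
          ![0, 0, 0, 0, 0, 0, 1],
          ![0, 0, 0, 0, 0, 1, 0],
          ![0, 0, 0, 0, 1, 0, 0],
          ![1, 0, p 4, p 1 - p 5, 0, 0, 0]} : Set (Fin 7 → ℝ)) ≤
        LinearMap.ker φ := by
      rw [Submodule.span_le]
      intro v hv
      simp only [Set.mem_insert_iff, Set.mem_singleton_iff] at hv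
      rcases hv with rfl | rfl | rfl | rfl | rfl <;>
        simp [hφ, ex3B1]
    have hφ0 := hker h
    simp only [LinearMap.mem_ker, hφ, LinearMap.sub_apply, LinearMap.smul_apply,
      LinearMap.proj_apply, Pi.sub_apply, Pi.smul_apply, smul_eq_mul] at hφ0
    simp only [Matrix.cons_val_zero, Matrix.cons_val_two, Matrix.tail_cons,
      Matrix.head_cons] at hφ0
    have h1 : α1 ^ 2 * p 1 = 0 := by linarith
    have h2 : α1 ^ 2 = 0 := by
      rcases mul_eq_zero.mp h1 with h | h
      · exact h
      · exact absurd h hp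
    exact pow_eq_zero_iff (by norm_num) |>.mp h2
  · rintro rfl
    simp only [ne_eq, OfNat.ofNat_ne_zero, not_false_eq_true, zero_pow, zero_smul,
      mul_zero, zero_mul, sub_zero, smul_zero, zero_sub, neg_zero, sub_self]
    exact zero_mem _
end

section
/- Let t ↦ (z¹(t),…,z⁷(t), v¹(t), v²(t)) be a smooth solution of the system of Example 3 on an interval I, and suppose 1 + (z¹)''(t) ≠ 0 for all t ∈ I. Then for all t ∈ I: z² = (z¹)', v¹ = (z¹)'', z⁴ = (z³)', z⁵ = (z³)''/(1 + (z¹)''), z⁶ = ((z³)''/(1 + (z¹)''))' − (z¹)'·(z¹)'', z⁷ = (((z³)''/(1 + (z¹)''))' − (z¹)'·(z¹)'')', and v² = (z⁷)'. In particular, the entire state and both inputs are determined by the pair (z¹, z³) and finitely many of their time derivatives, so (z¹, z³) is an x-flat output of the system of Example 3. -/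
/-- Along any smooth solution of the system of Example 3
(`ż¹ = z²`, `ż² = v¹`, `ż³ = z⁴`, `ż⁴ = z⁵(1+v¹)`, `ż⁵ = z⁶ + z²v¹`, `ż⁶ = z⁷`,
`ż⁷ = v²`) on an open interval `I` with `1 + (z¹)'' ≠ 0 on I`, the entire state and
both inputs are determined by `(z¹, z³)` and finitely many of their time derivatives;
i.e. `(z¹, z³)` is an `x`-flat output of the system of Example 3. -/
theorem example3_flat_parameterization
    (I : Set ℝ) (hI : IsOpen I) (hI' : ∃ a b : ℝ, I = Set.Ioo a b)
    (z1 z2 z3 z4 z5 z6 z7 v1 v2 : ℝ → ℝ)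
    (hz1 : ContDiffOn ℝ (⊤ : ℕ∞) z1 I) (hz2 : ContDiffOn ℝ (⊤ : ℕ∞) z2 I)
    (hz3 : ContDiffOn ℝ (⊤ : ℕ∞) z3 I) (hz4 : ContDiffOn ℝ (⊤ : ℕ∞) z4 I)
    (hz5 : ContDiffOn ℝ (⊤ : ℕ∞) z5 I) (hz6 : ContDiffOn ℝ (⊤ : ℕ∞) z6 I)
    (hz7 : ContDiffOn ℝ (⊤ : ℕ∞) z7 I)
    (hv1 : ContDiffOn ℝ (⊤ : ℕ∞) v1 I) (hv2 : ContDiffOn ℝ (⊤ : ℕ∞) v2 I)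
    (ode1 : ∀ t ∈ I, deriv z1 t = z2 t)
    (ode2 : ∀ t ∈ I, deriv z2 t = v1 t)
    (ode3 : ∀ t ∈ I, deriv z3 t = z4 t)
    (ode4 : ∀ t ∈ I, deriv z4 t = z5 t * (1 + v1 t))
    (ode5 : ∀ t ∈ I, deriv z5 t = z6 t + z2 t * v1 t)
    (ode6 : ∀ t ∈ I, deriv z6 t = z7 t)
    (ode7 : ∀ t ∈ I, deriv z7 t = v2 t)
    (hreg : ∀ t ∈ I, 1 + deriv (deriv z1) t ≠ 0) :
    ∀ t ∈ I,
      z2 t = deriv z1 t ∧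
      v1 t = deriv (deriv z1) t ∧
      z4 t = deriv z3 t ∧
      z5 t = deriv (deriv z3) t / (1 + deriv (deriv z1) t) ∧
      z6 t = deriv (fun s => deriv (deriv z3) s / (1 + deriv (deriv z1) s)) t -
              deriv z1 t * deriv (deriv z1) t ∧
      z7 t = deriv (fun s =>
              deriv (fun r => deriv (deriv z3) r / (1 + deriv (deriv z1) r)) s -
                deriv z1 s * deriv (deriv z1) s) t ∧
      v2 t = deriv z7 t := by
  have key : ∀ (f g : ℝ → ℝ), (∀ s ∈ I, f s = g s) → ∀ t ∈ I, deriv f t = deriv g t := by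
    intro f g h t ht
    exact Filter.EventuallyEq.deriv_eq (Filter.eventuallyEq_of_mem (hI.mem_nhds ht) h)
  have e1 : ∀ s ∈ I, deriv (deriv z1) s = v1 s := by
    intro s hs
    rw [key (deriv z1) z2 ode1 s hs, ode2 s hs]
  have e3 : ∀ s ∈ I, deriv (deriv z3) s = z5 s * (1 + v1 s) := by
    intro s hs
    rw [key (deriv z3) z4 ode3 s hs, ode4 s hs]
  have hz5eq : ∀ s ∈ I, deriv (deriv z3) s / (1 + deriv (deriv z1) s) = z5 s := by
    intro s hs
    rw [e3 s hs, e1 s hs]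
    field_simp [(e1 s hs) ▸ hreg s hs]
  have e6 : ∀ s ∈ I,
      deriv (fun r => deriv (deriv z3) r / (1 + deriv (deriv z1) r)) s
        - deriv z1 s * deriv (deriv z1) s = z6 s := by
    intro s hs
    rw [key _ z5 hz5eq s hs, ode5 s hs, ode1 s hs, e1 s hs]
    ring
  intro t ht
  refine ⟨(ode1 t ht).symm, (e1 t ht).symm, (ode3 t ht).symm, (hz5eq t ht).symm, ?_, ?_, (ode7 t ht).symm⟩
  · have := e6 t ht
    linarith
  · rw [key _ z6 e6 t ht, ode6 t ht]
end
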